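/- arXiv:1807.08996 — 7 statements merged into one kernel-verified Lean document; each statement's English description precedes it below -/
import Mathlib

section
/- Every linear subspace F of the real vector space of symmetric 3×3 real matrices with dim F ≥ 3 contains a matrix having three pairwise distinct eigenvalues. -/
/-!
Suppose no matrix of `F` has three distinct eigenvalues. The trace-free matrices of `F` form a
subspace of dimension at least two, on which `det` is a continuous odd function; since the
complement of `0` is connected there, `det` vanishes at some nonzero trace-free `M ∈ F`. The
eigenvalues of `M` sum to `0`, multiply to `0`, and two of them coincide, so all three vanish
and `M = 0`, a contradiction.
-/

open Matrix Module

theorem Function.Odd.exists_ne_zero_eq_zero {E : Type*} [AddCommGroup E] [Module ℝ E]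
    [TopologicalSpace E] [ContinuousAdd E] [ContinuousSMul ℝ E] (hE : 1 < Module.rank ℝ E)
    {f : E → ℝ} (hodd : f.Odd) (hf : Continuous f) : ∃ x ≠ (0 : E), f x = 0 := by
  have : Nontrivial E := rank_pos_iff_nontrivial.mp (zero_lt_one.trans hE)
  obtain ⟨x, hx⟩ := exists_ne (0 : E)
  obtain ⟨y, hy, hfy⟩ : ∃ y ≠ (0 : E), f y ≤ 0 := by
    rcases le_total (f x) 0 with h | h
    · exact ⟨x, hx, h⟩
    · exact ⟨-x, neg_ne_zero.mpr hx, by rw [hodd]; linarith⟩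
  have hconn := (isConnected_compl_singleton_of_one_lt_rank hE (0 : E)).isPreconnected
  obtain ⟨z, hz, hfz⟩ := hconn.intermediate_value (a := y) (b := -y) hy (neg_ne_zero.mpr hy)
    hf.continuousOn ⟨hfy, by rw [hodd]; linarith⟩
  exact ⟨z, hz, hfz⟩

theorem LinearMap.finrank_le_finrank_ker_add_one {K V : Type*} [Field K] [AddCommGroup V]
    [Module K V] [FiniteDimensional K V] (f : V →ₗ[K] K) :
    finrank K V ≤ finrank K (LinearMap.ker f) + 1 := by
  have hrange : finrank K (LinearMap.range f) ≤ 1 :=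
    finrank_self K ▸ (LinearMap.range f).finrank_le
  have := f.finrank_range_add_finrank_ker
  omega

theorem Matrix.IsHermitian.eq_zero_of_trace_eq_zero_of_det_eq_zero
    {M : Matrix (Fin 3) (Fin 3) ℝ} (hM : M.IsHermitian) (htr : M.trace = 0) (hdet : M.det = 0)
    (hspec : (spectrum ℝ M).ncard ≠ 3) : M = 0 := by
  have hrep : hM.eigenvalues 0 = hM.eigenvalues 1 ∨ hM.eigenvalues 0 = hM.eigenvalues 2 ∨
      hM.eigenvalues 1 = hM.eigenvalues 2 := by
    by_contra! hne
    refine hspec ?_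
    rw [hM.spectrum_real_eq_range_eigenvalues, Set.ncard_range_of_injective, Nat.card_fin]
    intro i j hij
    fin_cases i <;> fin_cases j <;> simp_all [eq_comm]
  have hsum : hM.eigenvalues 0 + hM.eigenvalues 1 + hM.eigenvalues 2 = 0 := by
    simpa [Fin.sum_univ_three, htr] using hM.trace_eq_sum_eigenvalues.symm
  have hprod : hM.eigenvalues 0 * hM.eigenvalues 1 * hM.eigenvalues 2 = 0 := by
    simpa [Fin.prod_univ_three, hdet] using hM.det_eq_prod_eigenvalues.symm
  have hzero : hM.eigenvalues 0 = 0 ∧ hM.eigenvalues 1 = 0 ∧ hM.eigenvalues 2 = 0 := by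
    rcases hrep with h | h | h <;> rcases mul_eq_zero.mp hprod with h' | h' <;>
      try rcases mul_eq_zero.mp h' with h' | h'
    all_goals refine ⟨?_, ?_, ?_⟩ <;> linarith
  rw [← hM.eigenvalues_eq_zero_iff]
  ext i
  fin_cases i
  exacts [hzero.1, hzero.2.1, hzero.2.2]

/-- Every linear subspace `F` of the real symmetric `3 × 3` matrices with
`dim F ≥ 3` contains a matrix having three pairwise distinct eigenvalues. -/
theorem subspace_dim_ge_three_contains_orthotropic
    (F : Submodule ℝ (Matrix (Fin 3) (Fin 3) ℝ))
    (hsym : ∀ m ∈ F, mᵀ = m) (hdim : 3 ≤ Module.finrank ℝ F) :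
    ∃ a ∈ F, (spectrum ℝ a).ncard = 3 := by
  by_contra! hcon
  let τ : F →ₗ[ℝ] ℝ := (traceLinearMap (Fin 3) ℝ ℝ).comp F.subtype
  have hE : 1 < finrank ℝ (LinearMap.ker τ) := by
    have := τ.finrank_le_finrank_ker_add_one
    omega
  obtain ⟨M, hM0, hdet⟩ := Function.Odd.exists_ne_zero_eq_zero
    (f := fun M : LinearMap.ker τ => ((M : F) : Matrix (Fin 3) (Fin 3) ℝ).det)
    (one_lt_rank_of_one_lt_finrank hE) (fun M => by norm_num [det_neg]) (by fun_prop)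
  have hM : ((M : F) : Matrix (Fin 3) (Fin 3) ℝ).IsHermitian := by
    rw [IsHermitian, conjTranspose_eq_transpose_of_trivial]
    exact hsym _ (M : F).2
  have hM_zero := hM.eq_zero_of_trace_eq_zero_of_det_eq_zero M.2 hdet (hcon _ (M : F).2)
  exact hM0 (by simpa using hM_zero)
end

section
/- Let F be a linear subspace of the real symmetric 3×3 matrices which contains the identity matrix and is closed under the symmetrized product (a,b) ↦ (a·b + b·a)/2. Then the dimension of F is 1, 2, 3, 4 or 6; in particular dim F ≠ 5. -/
/-!
Let `S` be the space of symmetric `n × n` real matrices, with the trace form `tr (a * b)`, which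
is positive definite on `S`. If `F ⊊ S` is closed under `a * b + b * a`, pick a nonzero `q ∈ S`
orthogonal to `F`. Since `tr ((q * a + a * q) * b) = tr (q * (a * b + b * a))`, the map
`a ↦ q * a + a * q` sends `F` into `S ∩ F⊥`, a space of dimension `dim S - dim F`. Its kernel
consists of symmetric matrices anticommuting with `q`; diagonalising `q = diag d` with `d k ≠ 0`,
for every `j` one of the entries `(k, j)`, `(j, j)` of such a matrix vanishes, so the kernel has
dimension at most `dim S - n`. Hence `n ≤ 2 (dim S - dim F)`: for `n = 3`, where `dim S = 6`,
the dimension `5` is impossible, and `1 ∈ F` excludes the dimension `0`.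
-/

open Matrix Module

section Anticommutant

variable (R : Type*) {A B : Type*} [CommSemiring R] [Ring A] [Algebra R A]

def anticommutator (q : A) : A →ₗ[R] A := LinearMap.mulLeft R q + LinearMap.mulRight R q

@[simp]
lemma anticommutator_apply (q a : A) : anticommutator R q a = q * a + a * q := rfl

variable {R} [StarRing A]

lemma IsSelfAdjoint.anticommutator {q a : A} (hq : IsSelfAdjoint q) (ha : IsSelfAdjoint a) :
    IsSelfAdjoint (anticommutator R q a) := by
  simp only [IsSelfAdjoint, anticommutator_apply, star_add, star_mul, hq.star_eq, ha.star_eq,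
    add_comm]

variable (R) [StarRing R] [TrivialStar R] [StarModule R A]

def selfAdjointAnticommutant (q : A) : Submodule R A :=
  selfAdjoint.submodule R A ⊓ LinearMap.ker (anticommutator R q)

variable {R}

lemma mem_selfAdjointAnticommutant {q a : A} :
    a ∈ selfAdjointAnticommutant R q ↔ IsSelfAdjoint a ∧ q * a + a * q = 0 := Iff.rfl

lemma selfAdjointAnticommutant_le_selfAdjoint (q : A) :
    selfAdjointAnticommutant R q ≤ selfAdjoint.submodule R A :=
  inf_le_left

variable [Ring B] [Algebra R B] [StarRing B] [StarModule R B]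

lemma map_mem_selfAdjointAnticommutant {F : Type*} [FunLike F A B] [AlgHomClass F R A B]
    [StarHomClass F A B] (φ : F) {q a : A} (ha : a ∈ selfAdjointAnticommutant R q) :
    φ a ∈ selfAdjointAnticommutant R (φ q) := by
  rw [mem_selfAdjointAnticommutant] at ha ⊢
  exact ⟨ha.1.map φ, by rw [← map_mul, ← map_mul, ← map_add, ha.2, map_zero]⟩

lemma finrank_selfAdjointAnticommutant_starAlgEquiv (φ : A ≃⋆ₐ[R] B) (q : A) :
    finrank R (selfAdjointAnticommutant R (φ q)) = finrank R (selfAdjointAnticommutant R q) := by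
  have hmap : (selfAdjointAnticommutant R q).map (φ.toAlgEquiv.toLinearEquiv : A →ₗ[R] B) =
      selfAdjointAnticommutant R (φ q) := by
    refine le_antisymm (Submodule.map_le_iff_le_comap.2 fun a ha ↦ ?_) fun a ha ↦ ?_
    · exact map_mem_selfAdjointAnticommutant φ ha
    · refine ⟨φ.symm a, ?_, by simp⟩
      simpa using map_mem_selfAdjointAnticommutant φ.symm ha
  rw [← hmap, LinearEquiv.finrank_map_eq]

end Anticommutant

section SelfAdjointMatrix

variable {R n : Type*} [CommRing R] [StarRing R] [TrivialStar R]

def selfAdjointMatrixEquivSym2 :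
    selfAdjoint.submodule R (Matrix n n R) ≃ₗ[R] (Sym2 n → R) where
  toFun a :=
    Sym2.lift ⟨fun i j ↦ a.1 i j, fun i j ↦ ((isHermitian_iff_isSymm.1 a.2).apply i j).symm⟩
  invFun v := ⟨of fun i j ↦ v s(i, j), by ext i j; simp [Sym2.eq_swap]⟩
  map_add' a b := by ext ⟨i, j⟩; rfl
  map_smul' c a := by ext ⟨i, j⟩; rfl
  left_inv a := by ext i j; rfl
  right_inv v := by ext ⟨i, j⟩; rfl

@[simp]
lemma selfAdjointMatrixEquivSym2_apply_mk (a : selfAdjoint.submodule R (Matrix n n R)) (i j : n) :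
    selfAdjointMatrixEquivSym2 a s(i, j) = a.1 i j := rfl

lemma finrank_selfAdjoint_matrix [StrongRankCondition R] [Fintype n] :
    finrank R (selfAdjoint.submodule R (Matrix n n R)) = Fintype.card (Sym2 n) := by
  rw [selfAdjointMatrixEquivSym2.finrank_eq, finrank_fintype_fun_eq_card]

end SelfAdjointMatrix

section DiagonalAnticommutant

variable {R n : Type*} [Field R]

def pairSum (d : n → R) : Sym2 n → R :=
  Sym2.lift ⟨fun i j ↦ d i + d j, fun _ _ ↦ add_comm _ _⟩

@[simp]
lemma pairSum_mk (d : n → R) (i j : n) : pairSum d s(i, j) = d i + d j := rfl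

lemma card_pairSum_eq_zero_add_card_le [CharZero R] [Finite n] {d : n → R} (hd : d ≠ 0) :
    Nat.card {z // pairSum d z = 0} + Nat.card n ≤ Nat.card (Sym2 n) := by
  classical
  have := Fintype.ofFinite n
  obtain ⟨k, hk⟩ := Function.ne_iff.1 hd
  let f : n → {z // ¬pairSum d z = 0} := fun j ↦
    if h : d j + d k = 0 then
      ⟨s(j, j), by
        rw [pairSum_mk, eq_neg_of_add_eq_zero_left h, ← neg_add, neg_eq_zero]
        exact add_self_eq_zero.not.2 hk⟩
    else ⟨s(k, j), by rwa [pairSum_mk, add_comm]⟩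
  have hf : Function.Injective f := by
    intro j j' h
    simp only [f] at h
    split_ifs at h <;> simp at h <;> grind
  have hcompl := Fintype.card_subtype_compl (fun z ↦ pairSum d z = 0)
  have hle := Fintype.card_subtype_le (fun z ↦ pairSum d z = 0)
  have hinj := Fintype.card_le_of_injective f hf
  simp only [Nat.card_eq_fintype_card]
  omega

variable [StarRing R] [TrivialStar R] [Fintype n] [DecidableEq n]

lemma add_mul_apply_eq_zero_of_mem_selfAdjointAnticommutant {d : n → R} {a : Matrix n n R}
    (ha : a ∈ selfAdjointAnticommutant R (diagonal d)) (i j : n) : (d i + d j) * a i j = 0 := by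
  have := congrFun₂ (mem_selfAdjointAnticommutant.1 ha).2 i j
  simp only [Matrix.add_apply, diagonal_mul, mul_diagonal, Matrix.zero_apply] at this
  linear_combination this

lemma finrank_selfAdjointAnticommutant_diagonal_le (d : n → R) :
    finrank R (selfAdjointAnticommutant R (diagonal d)) ≤ Nat.card {z // pairSum d z = 0} := by
  let ι := Submodule.inclusion (selfAdjointAnticommutant_le_selfAdjoint (R := R) (diagonal d))
  let g := LinearMap.funLeft R R (Subtype.val : {z // pairSum d z = 0} → Sym2 n) ∘ₗ
    selfAdjointMatrixEquivSym2.toLinearMap ∘ₗ ι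
  have hg : Function.Injective g := by
    rw [← LinearMap.ker_eq_bot, LinearMap.ker_eq_bot']
    intro a hga
    suffices selfAdjointMatrixEquivSym2 (ι a) = 0 from
      Submodule.inclusion_injective _ (selfAdjointMatrixEquivSym2.map_eq_zero_iff.1 this)
    ext z
    induction z using Sym2.ind with | _ i j => ?_
    by_cases hz : d i + d j = 0
    · exact congrFun hga ⟨s(i, j), hz⟩
    · simpa [ι, hz] using add_mul_apply_eq_zero_of_mem_selfAdjointAnticommutant a.2 i j
  classical
  simpa [Nat.card_eq_fintype_card, finrank_fintype_fun_eq_card] using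
    LinearMap.finrank_le_finrank_of_injective hg

theorem finrank_selfAdjointAnticommutant_diagonal_add_card_le [CharZero R] {d : n → R}
    (hd : d ≠ 0) : finrank R (selfAdjointAnticommutant R (diagonal d)) + Fintype.card n ≤
      finrank R (selfAdjoint.submodule R (Matrix n n R)) := by
  have := card_pairSum_eq_zero_add_card_le hd
  rw [finrank_selfAdjoint_matrix]
  simp only [Nat.card_eq_fintype_card] at this
  linarith [finrank_selfAdjointAnticommutant_diagonal_le d]

end DiagonalAnticommutant

theorem finrank_selfAdjointAnticommutant_add_card_le {n : Type*} [Fintype n] [DecidableEq n]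
    {q : Matrix n n ℝ} (hq : IsSelfAdjoint q) (hq0 : q ≠ 0) :
    finrank ℝ (selfAdjointAnticommutant ℝ q) + Fintype.card n ≤
      finrank ℝ (selfAdjoint.submodule ℝ (Matrix n n ℝ)) := by
  have hspec := hq.isHermitian.spectral_theorem
  have hd : (RCLike.ofReal ∘ hq.isHermitian.eigenvalues : n → ℝ) ≠ 0 := by
    intro h
    rw [h, diagonal_zero', map_zero] at hspec
    exact hq0 hspec
  rw [hspec, finrank_selfAdjointAnticommutant_starAlgEquiv]
  exact finrank_selfAdjointAnticommutant_diagonal_add_card_le hd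

namespace Matrix

variable (n R : Type*) [Fintype n] [CommRing R]

def traceForm : LinearMap.BilinForm R (Matrix n n R) :=
  (LinearMap.mul R (Matrix n n R)).compr₂ (traceLinearMap n R R)

variable {n R}

@[simp]
lemma traceForm_apply (a b : Matrix n n R) : traceForm n R a b = trace (a * b) := rfl

lemma trace_mul_anticommutator (q a b : Matrix n n R) :
    trace (b * (q * a + a * q)) = trace ((a * b + b * a) * q) := by
  rw [mul_add, add_mul, trace_add, trace_add, ← mul_assoc, ← mul_assoc, trace_mul_cycle b q a]

lemma anticommutator_mem_orthogonal_traceForm [DecidableEq n] {F : Submodule R (Matrix n n R)}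
    (hF : ∀ a ∈ F, ∀ b ∈ F, a * b + b * a ∈ F) {q a : Matrix n n R}
    (hq : q ∈ (traceForm n R).orthogonal F) (ha : a ∈ F) :
    anticommutator R q a ∈ (traceForm n R).orthogonal F := by
  simp only [LinearMap.BilinForm.mem_orthogonal_iff, traceForm_apply] at hq ⊢
  intro b hb
  rw [anticommutator_apply, trace_mul_anticommutator]
  exact hq _ (hF a ha b hb)

end Matrix

theorem finrank_selfAdjoint_inf_orthogonal_add_finrank {n R : Type*} [Fintype n] [Field R]
    [PartialOrder R] [StarRing R] [StarOrderedRing R] [TrivialStar R]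
    {F : Submodule R (Matrix n n R)} (hF : F ≤ selfAdjoint.submodule R (Matrix n n R)) :
    finrank R ↥(selfAdjoint.submodule R (Matrix n n R) ⊓ (traceForm n R).orthogonal F) +
      finrank R F = finrank R (selfAdjoint.submodule R (Matrix n n R)) := by
  have horth := (traceForm n R).finrank_add_finrank_orthogonal' F
  set S := selfAdjoint.submodule R (Matrix n n R)
  set Fperp := (traceForm n R).orthogonal F
  have hdisj : (S ⊓ Fperp) ⊓ F = ⊥ := by
    refine eq_bot_iff.2 fun x ⟨⟨hxS, hxo⟩, hxF⟩ ↦ ?_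
    have hx : trace (xᴴ * x) = 0 := by
      rw [show xᴴ = x from hxS]
      exact hxo x hxF
    exact trace_conjTranspose_mul_self_eq_zero_iff.1 hx
  have hsum := Submodule.finrank_sup_add_finrank_inf_eq (S ⊓ Fperp) F
  have hsup_le := Submodule.finrank_mono (sup_le inf_le_left hF : S ⊓ Fperp ⊔ F ≤ S)
  have hsum' := Submodule.finrank_sup_add_finrank_inf_eq S Fperp
  have hsup_le' := Submodule.finrank_le (S ⊔ Fperp)
  rw [hdisj, finrank_bot] at hsum
  omega

theorem card_le_two_mul_finrank_sub_of_anticommutator_mem {n : Type*} [Fintype n]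
    [DecidableEq n] {F : Submodule ℝ (Matrix n n ℝ)}
    (hF : F ≤ selfAdjoint.submodule ℝ (Matrix n n ℝ))
    (hjordan : ∀ a ∈ F, ∀ b ∈ F, a * b + b * a ∈ F)
    (hlt : finrank ℝ F < finrank ℝ (selfAdjoint.submodule ℝ (Matrix n n ℝ))) :
    Fintype.card n ≤
      2 * (finrank ℝ (selfAdjoint.submodule ℝ (Matrix n n ℝ)) - finrank ℝ F) := by
  have hG := finrank_selfAdjoint_inf_orthogonal_add_finrank hF
  set G := selfAdjoint.submodule ℝ (Matrix n n ℝ) ⊓ (traceForm n ℝ).orthogonal F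
  obtain ⟨q, ⟨hqS, hqo⟩, hq0⟩ : ∃ q ∈ G, q ≠ 0 :=
    Submodule.exists_mem_ne_zero_of_ne_bot fun h ↦ by rw [h, finrank_bot] at hG; omega
  let L := (anticommutator ℝ q).domRestrict F
  have hrange : LinearMap.range L ≤ G := by
    rintro _ ⟨a, rfl⟩
    exact ⟨hqS.anticommutator (hF a.2), anticommutator_mem_orthogonal_traceForm hjordan hqo a.2⟩
  have hker : (LinearMap.ker L).map F.subtype ≤ selfAdjointAnticommutant ℝ q := by
    rintro _ ⟨a, ha, rfl⟩
    exact ⟨hF a.2, ha⟩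
  have hrank := L.finrank_range_add_finrank_ker
  have hrange_le := Submodule.finrank_mono hrange
  have hker_le := Submodule.finrank_mono hker
  rw [Submodule.finrank_map_subtype_eq] at hker_le
  have hK := finrank_selfAdjointAnticommutant_add_card_le hqS hq0
  omega

/-- A linear subspace `F` of the real symmetric `3 × 3` matrices which
contains the identity and is closed under the symmetrized product
`(a, b) ↦ (a·b + b·a)/2` has dimension 1, 2, 3, 4 or 6. -/
theorem dim_of_symmetrized_product_closed_subspace
    (F : Submodule ℝ (Matrix (Fin 3) (Fin 3) ℝ))
    (hsym : ∀ m ∈ F, mᵀ = m)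
    (hone : (1 : Matrix (Fin 3) (Fin 3) ℝ) ∈ F)
    (hprod : ∀ a ∈ F, ∀ b ∈ F, ((1 : ℝ) / 2) • (a * b + b * a) ∈ F) :
    Module.finrank ℝ F = 1 ∨ Module.finrank ℝ F = 2 ∨ Module.finrank ℝ F = 3 ∨
      Module.finrank ℝ F = 4 ∨ Module.finrank ℝ F = 6 := by
  have hF : F ≤ selfAdjoint.submodule ℝ (Matrix (Fin 3) (Fin 3) ℝ) := fun m hm ↦
    isHermitian_iff_isSymm.2 (hsym m hm)
  have hjordan : ∀ a ∈ F, ∀ b ∈ F, a * b + b * a ∈ F := fun a ha b hb ↦ by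
    simpa [smul_smul] using F.smul_mem 2 (hprod a ha b hb)
  have hS : finrank ℝ (selfAdjoint.submodule ℝ (Matrix (Fin 3) (Fin 3) ℝ)) = 6 := by
    rw [finrank_selfAdjoint_matrix, Sym2.card]
    rfl
  have hpos : finrank ℝ F ≠ 0 := fun h ↦ by
    simp [Submodule.finrank_eq_zero.1 h] at hone
  have hle := Submodule.finrank_mono hF
  have h5 : finrank ℝ F ≠ 5 := fun h ↦ by
    have := card_le_two_mul_finrank_sub_of_anticommutator_mem hF hjordan (by omega)
    simp only [Fintype.card_fin] at this
    omega
  omega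
end

section
/- A real symmetric 3×3 matrix a has a repeated eigenvalue (i.e. is at least transversely isotropic) if and only if the generalized cross product a × a² vanishes, that is, if and only if det of the 3×3 matrix with columns x, a·x, a²·x is zero for every x ∈ ℝ³. -/
/-! Diagonalise `a = U D Uᴴ` and write `x = U c`. The matrix with columns `x, a x, a² x` is then
`U · diagonal c · vandermonde λ`, where `λ` are the eigenvalues, so its determinant is
`det U · c₀ c₁ c₂ · ∏_{i<j} (λⱼ - λᵢ)`. As `det U ≠ 0`, taking `c = 1` shows that this vanishes
for every `x` exactly when two eigenvalues coincide. The argument works verbatim in any dimension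
for the Krylov matrix `[x, A x, …, Aᵐ⁻¹ x]`. -/

open Matrix

/-- Determinant of the `3 × 3` matrix with columns `u`, `v`, `w`. -/
def det3 (u v w : Fin 3 → ℝ) : ℝ := (Matrix.of fun i j => ![u, v, w] j i).det

namespace Matrix

section CommRing

variable {R : Type*} [CommRing R] {m : ℕ}

def krylov (A : Matrix (Fin m) (Fin m) R) (x : Fin m → R) : Matrix (Fin m) (Fin m) R :=
  of fun i k => (A ^ (k : ℕ) *ᵥ x) i

theorem krylov_mulVec_eq_mul_krylov {A D U : Matrix (Fin m) (Fin m) R} (h : A * U = U * D)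
    (c : Fin m → R) : krylov A (U *ᵥ c) = U * krylov D c := by
  have hpow (k : ℕ) : A ^ k * U = U * D ^ k := (SemiconjBy.pow_right h.symm k).symm
  ext i k
  rw [krylov, of_apply, mulVec_mulVec, hpow, ← mulVec_mulVec]
  rfl

theorem krylov_diagonal (d c : Fin m → R) :
    krylov (diagonal d) c = diagonal c * vandermonde d := by
  ext i k
  simp [krylov, diagonal_pow, mulVec_diagonal, vandermonde_apply, mul_comm]

theorem det_krylov_diagonal (d c : Fin m → R) :
    det (krylov (diagonal d) c) = (∏ i, c i) * det (vandermonde d) := by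
  rw [krylov_diagonal, det_mul, det_diagonal]

end CommRing

namespace IsHermitian

variable {𝕜 : Type*} [RCLike 𝕜] {m : ℕ} {A : Matrix (Fin m) (Fin m) 𝕜}

theorem mul_eigenvectorUnitary (hA : A.IsHermitian) :
    A * (hA.eigenvectorUnitary : Matrix (Fin m) (Fin m) 𝕜) =
      (hA.eigenvectorUnitary : Matrix (Fin m) (Fin m) 𝕜) *
        diagonal (RCLike.ofReal ∘ hA.eigenvalues) := by
  nth_rw 1 [hA.spectral_theorem]
  simp [Matrix.mul_assoc]

theorem det_krylov_eigenvectorUnitary_mulVec (hA : A.IsHermitian) (c : Fin m → 𝕜) :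
    det (krylov A ((hA.eigenvectorUnitary : Matrix (Fin m) (Fin m) 𝕜) *ᵥ c)) =
      det (hA.eigenvectorUnitary : Matrix (Fin m) (Fin m) 𝕜) *
        ((∏ i, c i) * det (vandermonde (RCLike.ofReal ∘ hA.eigenvalues))) := by
  rw [krylov_mulVec_eq_mul_krylov hA.mul_eigenvectorUnitary, det_mul, det_krylov_diagonal]

theorem forall_det_krylov_eq_zero_iff (hA : A.IsHermitian) :
    (∀ x, det (krylov A x) = 0) ↔ ¬ Function.Injective hA.eigenvalues := by
  have hU := (UnitaryGroup.det_isUnit hA.eigenvectorUnitary).ne_zero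
  rw [← (RCLike.ofReal_injective (K := 𝕜)).of_comp_iff, ← det_vandermonde_ne_zero_iff, not_not]
  constructor
  · intro h
    simpa [hA.det_krylov_eigenvectorUnitary_mulVec, hU] using
      h ((hA.eigenvectorUnitary : Matrix (Fin m) (Fin m) 𝕜) *ᵥ 1)
  · intro h x
    rw [← one_mulVec x, ← Unitary.coe_mul_star_self hA.eigenvectorUnitary, ← mulVec_mulVec,
      hA.det_krylov_eigenvectorUnitary_mulVec, h, mul_zero, mul_zero]

end IsHermitian

end Matrix

theorem det3_eq_det_krylov (a : Matrix (Fin 3) (Fin 3) ℝ) (x : Fin 3 → ℝ) :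
    det3 x (a *ᵥ x) ((a * a) *ᵥ x) = det (krylov a x) := by
  rw [det3, krylov]
  congr 1
  ext i k
  fin_cases k <;> simp [pow_two]

/-- A real symmetric `3 × 3` matrix `a` has a repeated eigenvalue
(is at least transversely isotropic) iff the generalized cross product `a × a²` vanishes,
i.e. iff `det(x, a·x, a²·x) = 0` for every `x ∈ ℝ³`. -/
theorem repeated_eigenvalue_iff_cross_product_self_sq_eq_zero
    (a : Matrix (Fin 3) (Fin 3) ℝ) (ha : a.IsHermitian) :
    (∃ i j : Fin 3, i ≠ j ∧ ha.eigenvalues i = ha.eigenvalues j) ↔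
      ∀ x : Fin 3 → ℝ, det3 x (a.mulVec x) ((a * a).mulVec x) = 0 := by
  simp_rw [det3_eq_det_krylov, ha.forall_det_krylov_eq_zero_iff, Function.not_injective_iff,
    and_comm]
end

section
/- Let a be a real symmetric 3×3 matrix with exactly two distinct eigenvalues (transversely isotropic) and let b be any real symmetric 3×3 matrix. Then the pair (a,b) is transversely isotropic — i.e. there exists a unit vector n ∈ ℝ³ such that every g ∈ SO(3) with g·n = n satisfies g a gᵀ = a and g b gᵀ = b — if and only if a × b = 0, that is, det of the matrix with columns x, a·x, b·x vanishes for every x ∈ ℝ³. -/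
/-!
Write `P = n nᵀ` and `K` for the matrix of `n × ·`, with `n` a unit vector, so `K² = P - 1`.
A symmetric `m` commuting with `K` lies in the span of `1` and `P`: `mK` is antisymmetric, hence
equal to the matrix of `w × ·` for a `w` with `w × n = mKn = 0`, so `mK = cK`, and multiplying by
`K` gives `m(P - 1) = c(P - 1)`. Invariance under the quarter turn `P + K` about `n` already forces
`m` to commute with `K`, because its square is the half turn `2P - 1`; conversely every rotation
fixing `n` fixes `1` and `P`.

If both `a` and `b` lie in that span, `ax` and `bx` lie in the span of `x` and `n`, so
`det(x, ax, bx) = 0`. Conversely, two eigenvalues give `a = λ + cP` with `c ≠ 0` by the spectral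
theorem, and then `det(x, ax, bx) = c (n·x) x·(Kbx)`. So the quadratic form of `Kb` vanishes off
the plane `n⊥`, hence everywhere by the parallelogram law, and `Kb` is antisymmetric, which says
exactly that `b` commutes with `K`.
-/

open Matrix

/-- The rotation group `SO(3)` as a set of real `3 × 3` matrices. -/
def SO3 : Set (Matrix (Fin 3) (Fin 3) ℝ) := {g | g * gᵀ = 1 ∧ g.det = 1}

section SquareMatrix

variable {R ι : Type*} [Fintype ι]

lemma commute_of_mul_mul_transpose_eq [CommRing R] [DecidableEq ι] {g m : Matrix ι ι R}
    (hg : g * gᵀ = 1) (h : g * m * gᵀ = m) : Commute g m :=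
  calc g * m = g * m * gᵀ * g := by rw [mul_assoc _ gᵀ, mul_eq_one_comm.1 hg, mul_one]
    _ = m * g := by rw [h]

lemma transpose_eq_neg_of_forall_dotProduct_mulVec_self_eq_zero [CommRing R] [DecidableEq ι]
    {M : Matrix ι ι R} (h : ∀ x, x ⬝ᵥ M *ᵥ x = 0) : Mᵀ = -M := by
  ext i j
  have hij := h (Pi.single i 1 + Pi.single j 1)
  rw [mulVec_add, add_dotProduct, dotProduct_add, dotProduct_add, h, h, zero_add,
    add_zero] at hij
  simp only [mulVec_single_one, single_one_dotProduct, col_apply] at hij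
  rw [transpose_apply, neg_apply]
  linear_combination hij

lemma dotProduct_mulVec_self_add_sub [CommRing R] (M : Matrix ι ι R) (x y : ι → R) :
    (x + y) ⬝ᵥ M *ᵥ (x + y) + (x - y) ⬝ᵥ M *ᵥ (x - y) =
      2 * (x ⬝ᵥ M *ᵥ x + y ⬝ᵥ M *ᵥ y) := by
  simp only [mulVec_add, mulVec_sub, dotProduct_add, dotProduct_sub, add_dotProduct,
    sub_dotProduct]
  ring

lemma forall_dotProduct_mulVec_self_eq_zero_of_forall_mul [Field R] [NeZero (2 : R)]
    {M : Matrix ι ι R} {n : ι → R} (hn : n ⬝ᵥ n ≠ 0) (hMn : n ⬝ᵥ M *ᵥ n = 0)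
    (h : ∀ x, (n ⬝ᵥ x) * (x ⬝ᵥ M *ᵥ x) = 0) (x : ι → R) : x ⬝ᵥ M *ᵥ x = 0 := by
  have of_ne (y : ι → R) (hy : n ⬝ᵥ y ≠ 0) : y ⬝ᵥ M *ᵥ y = 0 :=
    (mul_eq_zero.1 (h y)).resolve_left hy
  by_cases hx : n ⬝ᵥ x = 0
  · have := dotProduct_mulVec_self_add_sub M x n
    rw [of_ne _ (by simpa [dotProduct_add, hx] using hn),
      of_ne _ (by simpa [dotProduct_sub, hx] using hn), hMn] at this
    have h2 : (2 : R) * (x ⬝ᵥ M *ᵥ x) = 0 := by linear_combination -this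
    exact (mul_eq_zero.1 h2).resolve_left two_ne_zero
  · exact of_ne x hx

end SquareMatrix

section CommRing

variable {R : Type*} [CommRing R] {n : Fin 3 → R}

def crossMatrix (n : Fin 3 → R) : Matrix (Fin 3) (Fin 3) R :=
  !![0, -n 2, n 1; n 2, 0, -n 0; -n 1, n 0, 0]

lemma crossMatrix_mulVec (n v : Fin 3 → R) : crossMatrix n *ᵥ v = n ⨯₃ v := by
  ext i
  fin_cases i <;> simp [crossMatrix, cross_apply, mulVec, dotProduct, Fin.sum_univ_three] <;> ring

lemma transpose_crossMatrix (n : Fin 3 → R) : (crossMatrix n)ᵀ = -crossMatrix n := by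
  ext i j
  fin_cases i <;> fin_cases j <;> simp [crossMatrix]

lemma crossMatrix_smul (c : R) (n : Fin 3 → R) : crossMatrix (c • n) = c • crossMatrix n := by
  ext i j
  fin_cases i <;> fin_cases j <;> simp [crossMatrix]

lemma crossMatrix_mul_self (n : Fin 3 → R) :
    crossMatrix n * crossMatrix n = vecMulVec n n - (n ⬝ᵥ n) • 1 := by
  ext i j
  fin_cases i <;> fin_cases j <;>
    simp [crossMatrix, mul_apply, Fin.sum_univ_three, vecMulVec_apply, vec3_dotProduct] <;> ring

lemma crossMatrix_mul_vecMulVec_self (n : Fin 3 → R) : crossMatrix n * vecMulVec n n = 0 := by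
  rw [mul_vecMulVec, crossMatrix_mulVec, cross_self, zero_vecMulVec]

lemma vecMulVec_self_mul_crossMatrix (n : Fin 3 → R) : vecMulVec n n * crossMatrix n = 0 := by
  simpa [transpose_crossMatrix] using congrArg transpose (crossMatrix_mul_vecMulVec_self n)

lemma eq_smul_of_cross_eq_zero {v : Fin 3 → R} (hn : n ⬝ᵥ n = 1) (h : n ⨯₃ v = 0) :
    v = (n ⬝ᵥ v) • n := by
  have := cross_cross_eq_smul_sub_smul' n n v
  rw [h, map_zero, hn, one_smul, eq_comm, sub_eq_zero] at this
  exact this.symm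

lemma commute_crossMatrix_of_forall_dotProduct_mulVec_eq_zero {b : Matrix (Fin 3) (Fin 3) R}
    (hb : bᵀ = b) (h : ∀ x, x ⬝ᵥ (crossMatrix n * b) *ᵥ x = 0) : Commute b (crossMatrix n) := by
  have := transpose_eq_neg_of_forall_dotProduct_mulVec_self_eq_zero h
  rwa [transpose_mul, hb, transpose_crossMatrix, mul_neg, neg_inj] at this

def quarterTurn (n : Fin 3 → R) : Matrix (Fin 3) (Fin 3) R := vecMulVec n n + crossMatrix n

lemma quarterTurn_mulVec_self (hn : n ⬝ᵥ n = 1) : quarterTurn n *ᵥ n = n := by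
  rw [quarterTurn, add_mulVec, vecMulVec_mulVec, hn, crossMatrix_mulVec, cross_self]
  simp

lemma quarterTurn_mul_transpose (hn : n ⬝ᵥ n = 1) : quarterTurn n * (quarterTurn n)ᵀ = 1 := by
  rw [quarterTurn, transpose_add, transpose_vecMulVec, transpose_crossMatrix, add_mul, mul_add,
    mul_add, vecMulVec_mul_vecMulVec, hn, one_smul, mul_neg, mul_neg,
    vecMulVec_self_mul_crossMatrix, crossMatrix_mul_vecMulVec_self, crossMatrix_mul_self, hn,
    one_smul]
  abel

lemma quarterTurn_mul_self (hn : n ⬝ᵥ n = 1) :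
    quarterTurn n * quarterTurn n = (2 : R) • vecMulVec n n - 1 := by
  rw [quarterTurn, add_mul, mul_add, mul_add, vecMulVec_mul_vecMulVec, hn, one_smul,
    vecMulVec_self_mul_crossMatrix, crossMatrix_mul_vecMulVec_self, crossMatrix_mul_self, hn,
    one_smul, two_smul]
  abel

lemma det_quarterTurn (hn : n ⬝ᵥ n = 1) : (quarterTurn n).det = 1 := by
  rw [vec3_dotProduct] at hn
  simp [quarterTurn, crossMatrix, det_fin_three, vecMulVec_apply]
  linear_combination (n 0 * n 0 + n 1 * n 1 + n 2 * n 2 + 1) * hn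

def IsAxial (n : Fin 3 → R) (m : Matrix (Fin 3) (Fin 3) R) : Prop :=
  ∃ β γ : R, m = β • 1 + γ • vecMulVec n n

lemma smul_one_add_smul_vecMulVec_mulVec (β γ : R) (n x : Fin 3 → R) :
    (β • 1 + γ • vecMulVec n n) *ᵥ x = β • x + (γ * (n ⬝ᵥ x)) • n := by
  simp [add_mulVec, smul_mulVec, vecMulVec_mulVec, mul_smul]

lemma IsAxial.mul_mul_transpose_eq {m g : Matrix (Fin 3) (Fin 3) R} (h : IsAxial n m)
    (hg : g * gᵀ = 1) (hgn : g *ᵥ n = n) : g * m * gᵀ = m := by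
  obtain ⟨β, γ, rfl⟩ := h
  rw [mul_add, add_mul, Matrix.mul_smul, Matrix.smul_mul, mul_one, hg, Matrix.mul_smul,
    Matrix.smul_mul, mul_vecMulVec, hgn, vecMulVec_mul, vecMul_transpose, hgn]

end CommRing

section Field

variable {R : Type*} [Field R] [NeZero (2 : R)] {n : Fin 3 → R} {m : Matrix (Fin 3) (Fin 3) R}

lemma exists_crossMatrix_eq_of_transpose_eq_neg {C : Matrix (Fin 3) (Fin 3) R} (hC : Cᵀ = -C) :
    ∃ w, C = crossMatrix w := by
  have hanti (i j : Fin 3) : C j i = -C i j := congrFun (congrFun hC i) j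
  have hdiag (i : Fin 3) : C i i = 0 := by
    have h2 : (2 : R) * C i i = 0 := by linear_combination hanti i i
    exact (mul_eq_zero.1 h2).resolve_left two_ne_zero
  refine ⟨![C 2 1, C 0 2, C 1 0], ?_⟩
  ext i j
  fin_cases i <;> fin_cases j <;> simp [crossMatrix, hdiag, hanti 0 1, hanti 0 2, hanti 1 2]

lemma isAxial_of_commute_crossMatrix (hn : n ⬝ᵥ n = 1) (hm : mᵀ = m)
    (hmK : Commute m (crossMatrix n)) : IsAxial n m := by
  obtain ⟨w, hw⟩ : ∃ w, m * crossMatrix n = crossMatrix w := by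
    refine exists_crossMatrix_eq_of_transpose_eq_neg ?_
    rw [transpose_mul, transpose_crossMatrix, hm, neg_mul, hmK.eq]
  have hwn : n ⨯₃ w = 0 := by
    rw [← cross_anticomm, ← crossMatrix_mulVec, ← hw, ← mulVec_mulVec, crossMatrix_mulVec,
      cross_self, mulVec_zero, neg_zero]
  have hmn : n ⨯₃ (m *ᵥ n) = 0 := by
    rw [← crossMatrix_mulVec, mulVec_mulVec, ← hmK.eq, ← mulVec_mulVec, crossMatrix_mulVec,
      cross_self, mulVec_zero]
  have hmK' : m * crossMatrix n = (n ⬝ᵥ w) • crossMatrix n := by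
    conv_lhs => rw [hw, eq_smul_of_cross_eq_zero hn hwn, crossMatrix_smul]
  have hmP : m * vecMulVec n n = (n ⬝ᵥ m *ᵥ n) • vecMulVec n n := by
    conv_lhs => rw [mul_vecMulVec, eq_smul_of_cross_eq_zero hn hmn, smul_vecMulVec]
  have hmKK : m * (crossMatrix n * crossMatrix n) =
      (n ⬝ᵥ w) • (crossMatrix n * crossMatrix n) := by
    rw [← mul_assoc, hmK', smul_mul]
  rw [crossMatrix_mul_self, hn, one_smul, mul_sub, hmP, mul_one] at hmKK
  exact ⟨n ⬝ᵥ w, n ⬝ᵥ m *ᵥ n - n ⬝ᵥ w, by linear_combination (norm := module) -hmKK⟩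

lemma commute_crossMatrix_of_commute_quarterTurn (hn : n ⬝ᵥ n = 1)
    (h : Commute m (quarterTurn n)) : Commute m (crossMatrix n) := by
  have hP2 : Commute m ((2 : R) • vecMulVec n n) := by
    simpa [quarterTurn_mul_self hn] using (h.mul_right h).add_right (Commute.one_right m)
  have hP : Commute m (vecMulVec n n) := by
    simpa [smul_smul, inv_mul_cancel₀ (two_ne_zero : (2 : R) ≠ 0)] using hP2.smul_right (2⁻¹ : R)
  simpa [quarterTurn] using h.sub_right hP

end Field

lemma quarterTurn_mem_SO3 {n : Fin 3 → ℝ} (hn : n ⬝ᵥ n = 1) : quarterTurn n ∈ SO3 :=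
  ⟨quarterTurn_mul_transpose hn, det_quarterTurn hn⟩

lemma isAxial_of_forall_mul_mul_transpose_eq {n : Fin 3 → ℝ} {m : Matrix (Fin 3) (Fin 3) ℝ}
    (hn : n ⬝ᵥ n = 1) (hm : mᵀ = m) (h : ∀ g ∈ SO3, g *ᵥ n = n → g * m * gᵀ = m) :
    IsAxial n m :=
  isAxial_of_commute_crossMatrix hn hm <| commute_crossMatrix_of_commute_quarterTurn hn <|
    (commute_of_mul_mul_transpose_eq (quarterTurn_mul_transpose hn)
      (h _ (quarterTurn_mem_SO3 hn) (quarterTurn_mulVec_self hn))).symm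

lemma det3_eq_dotProduct_cross (u v w : Fin 3 → ℝ) : det3 u v w = u ⬝ᵥ v ⨯₃ w := by
  rw [triple_product_eq_det, det3, ← det_transpose]
  rfl

lemma det3_smul_add_smul (x z n : Fin 3 → ℝ) (β γ : ℝ) :
    det3 x (β • x + γ • n) z = γ * (x ⬝ᵥ n ⨯₃ z) := by
  simp [det3_eq_dotProduct_cross, dot_self_cross]

lemma IsAxial.det3_mulVec_eq_zero {n : Fin 3 → ℝ} {a b : Matrix (Fin 3) (Fin 3) ℝ}
    (ha : IsAxial n a) (hb : IsAxial n b) (x : Fin 3 → ℝ) : det3 x (a *ᵥ x) (b *ᵥ x) = 0 := by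
  obtain ⟨β, γ, rfl⟩ := ha
  obtain ⟨β', γ', rfl⟩ := hb
  rw [smul_one_add_smul_vecMulVec_mulVec, smul_one_add_smul_vecMulVec_mulVec, det3_smul_add_smul]
  simp

lemma exists_ne_forall_eq_of_ncard_range_eq_two {α : Type*} {f : Fin 3 → α}
    (h : (Set.range f).ncard = 2) : ∃ i l, f i ≠ l ∧ ∀ j ≠ i, f j = l := by
  have hrange : Set.range f = {f 0, f 1, f 2} := by
    ext x
    simp [Fin.exists_fin_succ, eq_comm]
  rw [hrange] at h
  by_cases h01 : f 0 = f 1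
  · refine ⟨2, f 0, fun h02 => ?_, fun j hj => by fin_cases j <;> simp_all⟩
    simp [h01, h02] at h
  · by_cases h02 : f 0 = f 2
    · exact ⟨1, f 0, Ne.symm h01, fun j hj => by fin_cases j <;> simp_all⟩
    · have h12 : f 1 = f 2 := by
        by_contra h12
        rw [Set.ncard_insert_of_notMem (by simp [h01, h02]), Set.ncard_pair h12] at h
        omega
      exact ⟨0, f 1, h01, fun j hj => by fin_cases j <;> simp_all⟩

lemma exists_eq_smul_one_add_smul_vecMulVec {a : Matrix (Fin 3) (Fin 3) ℝ} (ha : aᵀ = a)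
    (h2 : (spectrum ℝ a).ncard = 2) :
    ∃ n : Fin 3 → ℝ, n ⬝ᵥ n = 1 ∧ ∃ l c : ℝ, c ≠ 0 ∧ a = l • 1 + c • vecMulVec n n := by
  have hA : a.IsHermitian := by rwa [IsHermitian, conjTranspose_eq_transpose_of_trivial]
  rw [hA.spectrum_real_eq_range_eigenvalues] at h2
  obtain ⟨i, l, hil, hl⟩ := exists_ne_forall_eq_of_ncard_range_eq_two h2
  set v : Fin 3 → Fin 3 → ℝ := fun j => ⇑(hA.eigenvectorBasis j)
  have hv (j k : Fin 3) : v j ⬝ᵥ v k = if k = j then 1 else 0 := by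
    simpa [v, EuclideanSpace.inner_eq_star_dotProduct] using
      orthonormal_iff_ite.1 hA.eigenvectorBasis.orthonormal k j
  refine ⟨v i, by simpa using hv i i, l, hA.eigenvalues i - l, sub_ne_zero.2 hil, ?_⟩
  rw [← sub_eq_zero]
  apply Matrix.toEuclideanLin.injective
  refine hA.eigenvectorBasis.toBasis.ext fun j => ?_
  have hj : a *ᵥ v j = hA.eigenvalues j • v j := hA.mulVec_eigenvectorBasis j
  simp only [OrthonormalBasis.coe_toBasis, map_zero, LinearMap.zero_apply, toLpLin_apply]
  change WithLp.toLp 2 (_ *ᵥ v j) = 0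
  rw [sub_mulVec, add_mulVec, smul_mulVec, one_mulVec, smul_mulVec, vecMulVec_mulVec, hv, hj]
  by_cases hji : j = i
  · subst hji
    simp only [if_true, MulOpposite.op_one, one_smul]
    rw [← sub_sub, ← sub_smul, sub_self, WithLp.toLp_zero]
  · simp [hji, hl j hji]

/-- Let `a` be a real symmetric `3 × 3` matrix with exactly two distinct
eigenvalues (transversely isotropic) and `b` any real symmetric `3 × 3` matrix. The pair
`(a, b)` is transversely isotropic (some unit vector `n` is such that every rotation fixing
`n` fixes both `a` and `b`) iff `a × b = 0`, i.e. `det(x, a·x, b·x) = 0` for every `x`. -/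
theorem pair_transversely_isotropic_iff_cross_product_eq_zero
    (a b : Matrix (Fin 3) (Fin 3) ℝ) (ha : aᵀ = a) (hb : bᵀ = b)
    (h2 : (spectrum ℝ a).ncard = 2) :
    (∃ n : Fin 3 → ℝ, (∑ i, n i ^ 2) = 1 ∧
        ∀ g ∈ SO3, g.mulVec n = n → g * a * gᵀ = a ∧ g * b * gᵀ = b) ↔
      ∀ x : Fin 3 → ℝ, det3 x (a.mulVec x) (b.mulVec x) = 0 := by
  have hsum (n : Fin 3 → ℝ) : ∑ i, n i ^ 2 = n ⬝ᵥ n := by simp [dotProduct, sq]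
  constructor
  · rintro ⟨n, hn, hfix⟩
    rw [hsum] at hn
    exact (isAxial_of_forall_mul_mul_transpose_eq hn ha fun g hg hgn => (hfix g hg hgn).1)
      |>.det3_mulVec_eq_zero
        (isAxial_of_forall_mul_mul_transpose_eq hn hb fun g hg hgn => (hfix g hg hgn).2)
  · intro H
    obtain ⟨n, hn, l, c, hc, rfl⟩ := exists_eq_smul_one_add_smul_vecMulVec ha h2
    have hKb : ∀ x, x ⬝ᵥ (crossMatrix n * b) *ᵥ x = 0 := by
      refine forall_dotProduct_mulVec_self_eq_zero_of_forall_mul (n := n) (by simp [hn]) ?_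
        fun x => ?_
      · rw [← mulVec_mulVec, crossMatrix_mulVec, dot_self_cross]
      · have hx := H x
        rw [smul_one_add_smul_vecMulVec_mulVec, det3_smul_add_smul, mul_assoc,
          ← crossMatrix_mulVec, mulVec_mulVec] at hx
        exact (mul_eq_zero.1 hx).resolve_left hc
    have hbn := isAxial_of_commute_crossMatrix hn hb
      (commute_crossMatrix_of_forall_dotProduct_mulVec_eq_zero hb hKb)
    refine ⟨n, by rw [hsum, hn], fun g hg hgn => ⟨?_, hbn.mul_mul_transpose_eq hg.1 hgn⟩⟩
    exact IsAxial.mul_mul_transpose_eq ⟨l, c, rfl⟩ hg.1 hgn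
end

section
/- Let a and b be real symmetric 3×3 matrices. The pair (a,b) is orthotropic — i.e. there exists g ∈ SO(3) such that gᵀ·a·g and gᵀ·b·g are both diagonal, but there is no unit vector n ∈ ℝ³ such that every g ∈ SO(3) with g·n = n fixes both a and b — if and only if a·b = b·a (equivalently tr(a × b) = 0) and at least one of the following holds: (i) det(x, a·x, a²·x) ≠ 0 for some x ∈ ℝ³ (a × a² ≠ 0); (ii) det(x, b·x, b²·x) ≠ 0 for some x ∈ ℝ³ (b × b² ≠ 0); (iii) det(x, a·x, b·x) ≠ 0 for some x ∈ ℝ³ (a × b ≠ 0). -/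
open Matrix

namespace PairOrthotropic

abbrev M3 := Matrix (Fin 3) (Fin 3) ℝ

noncomputable def str (p q : ℝ) (n : Fin 3 → ℝ) : M3 := p • (1 : M3) + q • vecMulVec n n

def crossMat (n : Fin 3 → ℝ) : M3 := !![0, -n 2, n 1; n 2, 0, -n 0; -n 1, n 0, 0]

lemma det3_eq (u v w : Fin 3 → ℝ) : det3 u v w =
    u 0 * (v 1 * w 2 - v 2 * w 1) - v 0 * (u 1 * w 2 - u 2 * w 1)
      + w 0 * (u 1 * v 2 - u 2 * v 1) := by
  simp [det3, Matrix.det_fin_three]; ring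

lemma det3_mulVec (g : M3) (u v w : Fin 3 → ℝ) :
    det3 (g.mulVec u) (g.mulVec v) (g.mulVec w) = g.det * det3 u v w := by
  simp [det3_eq, mulVec, dotProduct, Fin.sum_univ_three, Matrix.det_fin_three]; ring



section
variable (n : Fin 3 → ℝ) (hn : n 0 ^ 2 + n 1 ^ 2 + n 2 ^ 2 = 1)

lemma crossMat_transpose : (crossMat n)ᵀ = -crossMat n := by
  ext i j; fin_cases i <;> fin_cases j <;> simp [crossMat]

lemma vecMulVec_transpose : (vecMulVec n n : M3)ᵀ = vecMulVec n n := by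
  ext i j; simp [vecMulVec, mul_comm]

lemma str_transpose (p q : ℝ) : (str p q n)ᵀ = str p q n := by
  simp [str, transpose_add, transpose_smul, vecMulVec_transpose]

lemma crossMat_mul_vecMulVec : crossMat n * vecMulVec n n = 0 := by
  ext i j; fin_cases i <;> fin_cases j <;>
    simp [crossMat, vecMulVec, Matrix.mul_apply, Fin.sum_univ_three] <;> ring

lemma vecMulVec_mul_crossMat : (vecMulVec n n : M3) * crossMat n = 0 := by
  ext i j; fin_cases i <;> fin_cases j <;>
    simp [crossMat, vecMulVec, Matrix.mul_apply, Fin.sum_univ_three] <;> ring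

include hn in
lemma crossMat_sq : crossMat n * crossMat n = vecMulVec n n - 1 := by
  ext i j; fin_cases i <;> fin_cases j <;>
    simp [crossMat, vecMulVec, Matrix.mul_apply, Fin.sum_univ_three, Matrix.one_apply] <;>
    linarith [hn]

include hn in
lemma vecMulVec_sq' : (vecMulVec n n : M3) * vecMulVec n n = vecMulVec n n := by
  ext i j
  simp [Matrix.mul_apply, vecMulVec, Fin.sum_univ_three]
  linear_combination (n i * n j) * hn

lemma crossMat_mulVec_self : (crossMat n).mulVec n = 0 := by
  funext i; fin_cases i <;> simp [crossMat, mulVec, dotProduct, Fin.sum_univ_three] <;> ring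

include hn in
lemma vecMulVec_mulVec_self : (vecMulVec n n : M3).mulVec n = n := by
  funext i
  simp [vecMulVec, mulVec, dotProduct, Fin.sum_univ_three]
  linear_combination (n i) * hn

include hn in
lemma g2_mem : str (-1) 2 n ∈ SO3 := by
  constructor
  · rw [str_transpose]
    have : str (-1) 2 n * str (-1) 2 n = str 1 0 n := by
      simp only [str, add_mul, mul_add, smul_mul_assoc, mul_smul_comm, one_mul, mul_one,
        vecMulVec_sq' n hn, smul_smul]
      module
    rw [this]; simp [str]
  · have : (str (-1) 2 n).det = 2 * (n 0 ^ 2 + n 1 ^ 2 + n 2 ^ 2) - 1 := by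
      simp [str, Matrix.det_fin_three, vecMulVec, Matrix.one_apply]; ring
    rw [this, hn]; ring

include hn in
lemma g90_mem : (vecMulVec n n + crossMat n : M3) ∈ SO3 := by
  constructor
  · rw [transpose_add, crossMat_transpose, vecMulVec_transpose]
    rw [show (vecMulVec n n + crossMat n) * (vecMulVec n n + -crossMat n) =
      vecMulVec n n * vecMulVec n n - vecMulVec n n * crossMat n + crossMat n * vecMulVec n n
        - crossMat n * crossMat n by noncomm_ring]
    rw [vecMulVec_sq' n hn, vecMulVec_mul_crossMat, crossMat_mul_vecMulVec, crossMat_sq n hn]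
    abel
  · have : (vecMulVec n n + crossMat n : M3).det = (n 0 ^ 2 + n 1 ^ 2 + n 2 ^ 2) ^ 2 := by
      simp [Matrix.det_fin_three, vecMulVec_apply, crossMat, Matrix.add_apply]; ring
    rw [this, hn]; ring

include hn in
omit hn in
lemma str_mulVec (p q : ℝ) (x : Fin 3 → ℝ) (i : Fin 3) :
    (str p q n).mulVec x i = p * x i + (q * (n 0 * x 0 + n 1 * x 1 + n 2 * x 2)) * n i := by
  fin_cases i <;>
    simp [str, mulVec, dotProduct, vecMulVec, Fin.sum_univ_three, Matrix.one_apply] <;> ring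

include hn in
lemma g2_fix : (str (-1) 2 n).mulVec n = n := by
  funext i; rw [str_mulVec]; linear_combination 2 * n i * hn

include hn in
lemma g90_fix : (vecMulVec n n + crossMat n : M3).mulVec n = n := by
  rw [Matrix.add_mulVec, vecMulVec_mulVec_self n hn, crossMat_mulVec_self]; simp

end

lemma antisym_axis (M : M3) (n : Fin 3 → ℝ) (hn : n 0 ^ 2 + n 1 ^ 2 + n 2 ^ 2 = 1)
    (hMt : Mᵀ = -M) (hMn : M.mulVec n = 0) :
    M = (M 2 1 * n 0 + M 0 2 * n 1 + M 1 0 * n 2) • crossMat n := by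
  have hs : ∀ i j : Fin 3, M j i = -M i j := fun i j => by
    have := congrFun (congrFun hMt i) j; simpa using this
  have he : ∀ i : Fin 3, M i 0 * n 0 + M i 1 * n 1 + M i 2 * n 2 = 0 := fun i => by
    have := congrFun hMn i; simpa [mulVec, dotProduct, Fin.sum_univ_three] using this
  have h00 := hs 0 0; have h11 := hs 1 1; have h22 := hs 2 2
  have h01 := hs 0 1; have h02 := hs 0 2; have h12 := hs 1 2
  have f1 : M 1 0 * n 0 = M 2 1 * n 2 := by linear_combination he 1 - (n 1/2) * h11 - n 2 * h12
  have f2 : M 1 0 * n 1 = M 0 2 * n 2 := by linear_combination n 1 * h01 - he 0 + (n 0/2) * h00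
  have f3 : M 0 2 * n 0 = M 2 1 * n 1 := by linear_combination n 0 * h02 - he 2 + (n 2/2) * h22
  ext i j
  fin_cases i <;> fin_cases j
  · simp [crossMat]; linarith [h00]
  · simp [crossMat]; linear_combination h01 + M 1 0 * hn - n 0 * f1 - n 1 * f2
  · simp [crossMat]; linear_combination -(M 0 2) * hn + n 0 * f3 - n 2 * f2
  · simp [crossMat]; linear_combination -(M 1 0) * hn + n 0 * f1 + n 1 * f2
  · simp [crossMat]; linarith [h11]
  · simp [crossMat]; linear_combination h12 + M 2 1 * hn + n 1 * f3 + n 2 * f1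
  · simp [crossMat]; linear_combination h02 + M 0 2 * hn - n 0 * f3 + n 2 * f2
  · simp [crossMat]; linear_combination -(M 2 1) * hn - n 1 * f3 - n 2 * f1
  · simp [crossMat]; linarith [h22]

lemma commutes_of_conj {g c : M3} (hg : g * gᵀ = 1) (h : g * c * gᵀ = c) : c * g = g * c := by
  have hg' : gᵀ * g = 1 := mul_eq_one_comm.mp hg
  calc c * g = g * c * gᵀ * g := by rw [h]
    _ = g * c * (gᵀ * g) := by rw [mul_assoc]
    _ = g * c := by rw [hg', mul_one]

lemma trace_str (p q : ℝ) (n : Fin 3 → ℝ) (hn : n 0 ^ 2 + n 1 ^ 2 + n 2 ^ 2 = 1) :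
    (str p q n).trace = 3 * p + q := by
  simp [str, Matrix.trace, Matrix.diag, Fin.sum_univ_three, vecMulVec_apply, Matrix.one_apply]
  linear_combination q * hn

lemma structured_of_comm (a : M3) (ha : aᵀ = a) (n : Fin 3 → ℝ)
    (hn : n 0 ^ 2 + n 1 ^ 2 + n 2 ^ 2 = 1)
    (hV : a * vecMulVec n n = vecMulVec n n * a)
    (hN : a * crossMat n = crossMat n * a) :
    ∃ p q, a = str p q n := by
  have hsym : ∀ i j, a i j = a j i := fun i j => by
    conv_lhs => rw [← ha]
    rfl
  set m := a.mulVec n with hmdef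
  have key : ∀ i j, m i * n j = n i * m j := by
    intro i j
    have h := Matrix.ext_iff.2 hV i j
    simp only [Matrix.mul_apply, vecMulVec_apply, Fin.sum_univ_three] at h
    have hmi : m i = a i 0 * n 0 + a i 1 * n 1 + a i 2 * n 2 := by
      simp [hmdef, mulVec, dotProduct, Fin.sum_univ_three]
    have hmj : m j = a j 0 * n 0 + a j 1 * n 1 + a j 2 * n 2 := by
      simp [hmdef, mulVec, dotProduct, Fin.sum_univ_three]
    rw [hmi, hmj]
    linear_combination h + n i * n 0 * hsym 0 j + n i * n 1 * hsym 1 j + n i * n 2 * hsym 2 j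
  set lam := n ⬝ᵥ m with hlamdef
  have hlam : lam = n 0 * m 0 + n 1 * m 1 + n 2 * m 2 := by
    simp [hlamdef, dotProduct, Fin.sum_univ_three]
  have hm : ∀ i, m i = lam * n i := by
    intro i
    linear_combination (-(m i)) * hn + n 0 * key i 0 + n 1 * key i 1 + n 2 * key i 2 - n i * hlam
  set p := (a.trace - lam) / 2 with hp
  set q := lam - p with hq
  set c := a - str p q n with hc
  have hcn : c.mulVec n = 0 := by
    funext i
    rw [hc, Matrix.sub_mulVec]
    have h1 : (str p q n).mulVec n i
        = p * n i + (q * (n 0 * n 0 + n 1 * n 1 + n 2 * n 2)) * n i := str_mulVec n p q n i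
    simp only [Pi.sub_apply, Pi.zero_apply, h1, ← hmdef]
    linear_combination hm i - (q * n i) * hn - n i * hq
  have hcV : c * vecMulVec n n = 0 := by
    ext i j
    have hcni := congrFun hcn i
    simp only [mulVec, dotProduct, Fin.sum_univ_three, Pi.zero_apply] at hcni
    simp only [Matrix.mul_apply, vecMulVec_apply, Fin.sum_univ_three, Matrix.zero_apply]
    linear_combination n j * hcni
  have hcN : c * crossMat n = crossMat n * c := by
    rw [hc]
    simp only [str, sub_mul, mul_sub, add_mul, mul_add, smul_mul_assoc, mul_smul_comm,
      one_mul, mul_one, hN, vecMulVec_mul_crossMat, crossMat_mul_vecMulVec]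
  have hct : cᵀ = c := by
    rw [hc, transpose_sub, ha, str_transpose]
  have hMt : (c * crossMat n)ᵀ = -(c * crossMat n) := by
    rw [transpose_mul, crossMat_transpose, hct, neg_mul, hcN]
  have hMn : (c * crossMat n).mulVec n = 0 := by
    rw [← Matrix.mulVec_mulVec, crossMat_mulVec_self, Matrix.mulVec_zero]
  set M := c * crossMat n with hM
  set t := M 2 1 * n 0 + M 0 2 * n 1 + M 1 0 * n 2 with ht
  have hMeq : M = t • crossMat n := antisym_axis M n hn hMt hMn
  have hstep : c * (crossMat n * crossMat n) = t • (crossMat n * crossMat n) := by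
    calc c * (crossMat n * crossMat n) = M * crossMat n := by rw [hM, mul_assoc]
      _ = (t • crossMat n) * crossMat n := by rw [hMeq]
      _ = t • (crossMat n * crossMat n) := smul_mul_assoc t _ _
  rw [crossMat_sq n hn, mul_sub, hcV, mul_one, zero_sub] at hstep
  have hceq : c = t • (1 : M3) - t • vecMulVec n n := by
    have := congrArg Neg.neg hstep
    rw [neg_neg, smul_sub] at this
    rw [this]; abel
  have hceq2 : c = str t (-t) n := by rw [hceq, str, neg_smul, ← sub_eq_add_neg]
  have htr0 : c.trace = 0 := by
    rw [hc, Matrix.trace_sub, trace_str p q n hn]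
    linear_combination -2 * hp - hq
  have htr2 : c.trace = 2 * t := by
    rw [hceq2, trace_str t (-t) n hn]; ring
  have ht0 : t = 0 := by rw [htr0] at htr2; linarith
  have hc0 : c = 0 := by rw [hceq, ht0]; simp
  refine ⟨p, q, ?_⟩
  have h := hc0
  rw [hc, sub_eq_zero] at h
  exact h


lemma rot2 (p q r : ℝ) : ∃ c s : ℝ, c ^ 2 + s ^ 2 = 1 ∧ (r - p) * (c * s) + q * (c ^ 2 - s ^ 2) = 0 := by
  by_cases hq : q = 0
  · exact ⟨1, 0, by norm_num, by simp [hq]⟩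
  · set D := Real.sqrt ((p - r) ^ 2 + 4 * q ^ 2) with hD
    have hD2 : D ^ 2 = (p - r) ^ 2 + 4 * q ^ 2 := Real.sq_sqrt (by positivity)
    set lam := (p + r + D) / 2 with hlam
    have key2 : q ^ 2 = (lam - p) * (lam - r) := by
      rw [hlam]; field_simp; linarith [hD2]
    set L := q ^ 2 + (lam - p) ^ 2 with hL
    have hLpos : 0 < L := by positivity
    have hsL : Real.sqrt L ^ 2 = L := Real.sq_sqrt hLpos.le
    have hsLne : Real.sqrt L ≠ 0 := by positivity
    refine ⟨q / Real.sqrt L, (lam - p) / Real.sqrt L, ?_, ?_⟩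
    · field_simp
      linarith [hsL, hL]
    · field_simp
      linear_combination (-q / 4) * hD2

lemma real_star (M : M3) : Mᴴ = Mᵀ := by
  ext i j; simp [conjTranspose_apply]

lemma diag_one (a : M3) (ha : aᵀ = a) : ∃ u : M3, u * uᵀ = 1 ∧ (uᵀ * a * u).IsDiag := by
  have hA : a.IsHermitian := by rw [Matrix.IsHermitian, real_star, ha]
  refine ⟨(hA.eigenvectorUnitary : M3), ?_, ?_⟩
  · have := (Unitary.mem_iff.mp hA.eigenvectorUnitary.2).2
    rw [Matrix.star_eq_conjTranspose, real_star] at this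
    exact this
  · have h := hA.conjStarAlgAut_star_eigenvectorUnitary
    rw [Unitary.conjStarAlgAut_apply] at h
    simp only [Unitary.coe_star, Matrix.star_eq_conjTranspose, real_star, transpose_transpose] at h
    rw [h]
    exact Matrix.isDiag_diagonal _

lemma assemble {a b : M3} (u R : M3) (hu : u * uᵀ = 1) (hR : R * Rᵀ = 1)
    (hA : (Rᵀ * (uᵀ * a * u) * R).IsDiag) (hB : (Rᵀ * (uᵀ * b * u) * R).IsDiag) :
    ∃ w : M3, w * wᵀ = 1 ∧ (wᵀ * a * w).IsDiag ∧ (wᵀ * b * w).IsDiag := by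
  refine ⟨u * R, ?_, ?_, ?_⟩
  · rw [transpose_mul]
    calc u * R * (Rᵀ * uᵀ) = u * (R * Rᵀ) * uᵀ := by simp only [Matrix.mul_assoc]
      _ = 1 := by rw [hR, mul_one, hu]
  · have : (u * R)ᵀ * a * (u * R) = Rᵀ * (uᵀ * a * u) * R := by
      rw [transpose_mul]; simp only [Matrix.mul_assoc]
    rw [this]; exact hA
  · have : (u * R)ᵀ * b * (u * R) = Rᵀ * (uᵀ * b * u) * R := by
      rw [transpose_mul]; simp only [Matrix.mul_assoc]
    rw [this]; exact hB

lemma simul_diag_orth (a b : M3) (ha : aᵀ = a) (hb : bᵀ = b) (hcomm : a * b = b * a) :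
    ∃ u : M3, u * uᵀ = 1 ∧ (uᵀ * a * u).IsDiag ∧ (uᵀ * b * u).IsDiag := by
  obtain ⟨u, hu, hda⟩ := diag_one a ha
  have hu' : uᵀ * u = 1 := mul_eq_one_comm.mp hu
  set A := uᵀ * a * u with hAdef
  set B := uᵀ * b * u with hBdef
  have hBt : Bᵀ = B := by
    rw [hBdef, transpose_mul, transpose_mul, transpose_transpose, hb, Matrix.mul_assoc]
  have hABcomm : A * B = B * A := by
    rw [hAdef, hBdef]
    calc uᵀ * a * u * (uᵀ * b * u) = uᵀ * (a * (u * uᵀ) * b) * u := by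
          simp only [Matrix.mul_assoc]
      _ = uᵀ * (a * b) * u := by rw [hu, mul_one]
      _ = uᵀ * (b * a) * u := by rw [hcomm]
      _ = uᵀ * (b * (u * uᵀ) * a) * u := by rw [hu, mul_one]
      _ = uᵀ * b * u * (uᵀ * a * u) := by simp only [Matrix.mul_assoc]
  set d : Fin 3 → ℝ := fun i => A i i with hd
  have hdA : A = diagonal d := by
    ext i j
    by_cases h : i = j
    · subst h; simp [diagonal, hd]
    · rw [hda h]; simp [diagonal, h]
  have hkey : ∀ i j, B i j * (d j - d i) = 0 := by
    intro i j
    have h1 := Matrix.ext_iff.2 hABcomm i j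
    rw [hdA, Matrix.diagonal_mul, Matrix.mul_diagonal] at h1
    linear_combination -h1
  -- B is symmetric entrywise
  have hBs : ∀ i j, B i j = B j i := fun i j => by
    have h := congrFun (congrFun hBt j) i; simpa using h
  have haA : a = u * A * uᵀ := by
    rw [hAdef]
    calc a = (u * uᵀ) * a * (u * uᵀ) := by rw [hu, one_mul, mul_one]
      _ = u * (uᵀ * a * u) * uᵀ := by simp only [Matrix.mul_assoc]
  by_cases h01 : d 0 = d 1
  · by_cases h02 : d 0 = d 2
    · -- all eigenvalues equal : a is scalar
      have hconst : diagonal d = d 0 • (1 : M3) := by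
        ext i j
        by_cases h : i = j
        · subst h
          fin_cases i <;> simp [diagonal, Matrix.one_apply, ← h01, ← h02]
        · simp [diagonal, Matrix.one_apply, h]
      have hAscalar : a = d 0 • (1 : M3) := by
        rw [haA, hdA, hconst]
        simp only [Matrix.mul_smul, Matrix.smul_mul, mul_one, one_mul, hu]
      obtain ⟨v, hv, hdbv⟩ := diag_one b hb
      refine ⟨v, hv, ?_, hdbv⟩
      rw [hAscalar]
      simp only [Matrix.mul_smul, Matrix.smul_mul, mul_one, one_mul,
        mul_eq_one_comm.mp hv]
      exact Matrix.isDiag_one.smul (d 0)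
    · -- d 0 = d 1 ≠ d 2 : rotate in the 01 plane
      have hB02 : B 0 2 = 0 :=
        (mul_eq_zero.mp (hkey 0 2)).resolve_right (sub_ne_zero.mpr (Ne.symm h02))
      have h12 : ¬ d 1 = d 2 := by rw [← h01]; exact h02
      have hB12 : B 1 2 = 0 :=
        (mul_eq_zero.mp (hkey 1 2)).resolve_right (sub_ne_zero.mpr (Ne.symm h12))
      obtain ⟨c, s, hcs, hrot⟩ := rot2 (B 0 0) (B 0 1) (B 1 1)
      set R : M3 := !![c,-s,0; s,c,0; 0,0,1] with hRdef
      have hRT : Rᵀ = !![c,s,0; -s,c,0; 0,0,1] := by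
        ext i j; fin_cases i <;> fin_cases j <;> simp [hRdef, Matrix.vecHead, Matrix.vecTail]
      have hR : R * Rᵀ = 1 := by
        ext i j
        fin_cases i <;> fin_cases j <;>
          simp [hRdef, hRT, Matrix.mul_apply, Matrix.vecMul, dotProduct, Matrix.vecHead, Matrix.vecTail, Function.comp, Fin.sum_univ_three, Matrix.one_apply] <;>
          first
          | ring1
          | linear_combination hcs
      refine assemble u R hu hR ?_ ?_
      · rw [← hAdef, hdA]
        intro i j hij
        fin_cases i <;> fin_cases j <;>
          simp [hRdef, hRT, Matrix.mul_apply, Matrix.vecMul, dotProduct, Matrix.vecHead, Matrix.vecTail, Function.comp, Matrix.diagonal_apply, Fin.sum_univ_three] at hij ⊢ <;>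
          first
          | ring1
          | linear_combination (c * s) * h01
          | linear_combination (-(c * s)) * h01
      · rw [← hBdef]
        intro i j hij
        fin_cases i <;> fin_cases j
        · exact absurd rfl hij
        · simp [hRdef, hRT, Matrix.mul_apply, Matrix.vecMul, dotProduct, Matrix.vecHead, Matrix.vecTail, Function.comp, Fin.sum_univ_three]
          linear_combination hrot - s ^ 2 * hBs 1 0
        · simp [hRdef, hRT, Matrix.mul_apply, Matrix.vecMul, dotProduct, Matrix.vecHead, Matrix.vecTail, Function.comp, Fin.sum_univ_three, hB02, hB12]
        · simp [hRdef, hRT, Matrix.mul_apply, Matrix.vecMul, dotProduct, Matrix.vecHead, Matrix.vecTail, Function.comp, Fin.sum_univ_three]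
          linear_combination hrot + c ^ 2 * hBs 1 0
        · exact absurd rfl hij
        · simp [hRdef, hRT, Matrix.mul_apply, Matrix.vecMul, dotProduct, Matrix.vecHead, Matrix.vecTail, Function.comp, Fin.sum_univ_three, hB02, hB12]
        · simp [hRdef, hRT, Matrix.mul_apply, Matrix.vecMul, dotProduct, Matrix.vecHead, Matrix.vecTail, Function.comp, Fin.sum_univ_three, hBs 2 0, hB02, hBs 2 1, hB12]
        · simp [hRdef, hRT, Matrix.mul_apply, Matrix.vecMul, dotProduct, Matrix.vecHead, Matrix.vecTail, Function.comp, Fin.sum_univ_three, hBs 2 0, hB02, hBs 2 1, hB12]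
        · exact absurd rfl hij
  · by_cases h02 : d 0 = d 2
    · -- d 0 = d 2, d 1 different : rotate in the 02 plane
      have hB01 : B 0 1 = 0 :=
        (mul_eq_zero.mp (hkey 0 1)).resolve_right (sub_ne_zero.mpr (Ne.symm h01))
      have h12 : ¬ d 1 = d 2 := fun h => h01 (h02.trans h.symm)
      have hB12 : B 1 2 = 0 := by
        have := (mul_eq_zero.mp (hkey 2 1)).resolve_right (sub_ne_zero.mpr h12)
        rw [hBs 1 2]; exact this
      obtain ⟨c, s, hcs, hrot⟩ := rot2 (B 0 0) (B 0 2) (B 2 2)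
      set R : M3 := !![c,0,-s; 0,1,0; s,0,c] with hRdef
      have hRT : Rᵀ = !![c,0,s; 0,1,0; -s,0,c] := by
        ext i j; fin_cases i <;> fin_cases j <;> simp [hRdef, Matrix.vecHead, Matrix.vecTail]
      have hR : R * Rᵀ = 1 := by
        ext i j
        fin_cases i <;> fin_cases j <;>
          simp [hRdef, hRT, Matrix.mul_apply, Matrix.vecMul, dotProduct, Matrix.vecHead, Matrix.vecTail, Function.comp, Fin.sum_univ_three, Matrix.one_apply] <;>
          first
          | ring1
          | linear_combination hcs
      refine assemble u R hu hR ?_ ?_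
      · rw [← hAdef, hdA]
        intro i j hij
        fin_cases i <;> fin_cases j <;>
          simp [hRdef, hRT, Matrix.mul_apply, Matrix.vecMul, dotProduct, Matrix.vecHead, Matrix.vecTail, Function.comp, Fin.sum_univ_three, Matrix.diagonal_apply] at hij ⊢ <;>
          first
          | ring1
          | linear_combination (c * s) * h02
          | linear_combination (-(c * s)) * h02
      · rw [← hBdef]
        intro i j hij
        fin_cases i <;> fin_cases j
        · exact absurd rfl hij
        · simp [hRdef, hRT, Matrix.mul_apply, Matrix.vecMul, dotProduct, Matrix.vecHead, Matrix.vecTail, Function.comp, Fin.sum_univ_three, hB01, hB12, hBs 1 0, hBs 2 1]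
        · simp [hRdef, hRT, Matrix.mul_apply, Matrix.vecMul, dotProduct, Matrix.vecHead, Matrix.vecTail, Function.comp, Fin.sum_univ_three]
          first
          | linear_combination hrot - s ^ 2 * hBs 2 0
          | linear_combination hrot + c ^ 2 * hBs 2 0
          | linear_combination hrot + s ^ 2 * hBs 2 0
          | linear_combination hrot - c ^ 2 * hBs 2 0
        · simp [hRdef, hRT, Matrix.mul_apply, Matrix.vecMul, dotProduct, Matrix.vecHead, Matrix.vecTail, Function.comp, Fin.sum_univ_three, hB01, hB12, hBs 1 0, hBs 2 1]
        · exact absurd rfl hij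
        · simp [hRdef, hRT, Matrix.mul_apply, Matrix.vecMul, dotProduct, Matrix.vecHead, Matrix.vecTail, Function.comp, Fin.sum_univ_three, hB01, hB12, hBs 1 0, hBs 2 1]
        · simp [hRdef, hRT, Matrix.mul_apply, Matrix.vecMul, dotProduct, Matrix.vecHead, Matrix.vecTail, Function.comp, Fin.sum_univ_three]
          first
          | linear_combination hrot + c ^ 2 * hBs 2 0
          | linear_combination hrot - s ^ 2 * hBs 2 0
          | linear_combination hrot + s ^ 2 * hBs 2 0
          | linear_combination hrot - c ^ 2 * hBs 2 0
        · simp [hRdef, hRT, Matrix.mul_apply, Matrix.vecMul, dotProduct, Matrix.vecHead, Matrix.vecTail, Function.comp, Fin.sum_univ_three, hB01, hB12, hBs 1 0, hBs 2 1]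
        · exact absurd rfl hij
    · by_cases h12 : d 1 = d 2
      · -- d 1 = d 2, d 0 different : rotate in the 12 plane
        have hB01 : B 0 1 = 0 :=
          (mul_eq_zero.mp (hkey 0 1)).resolve_right (sub_ne_zero.mpr (Ne.symm h01))
        have hB02 : B 0 2 = 0 :=
          (mul_eq_zero.mp (hkey 0 2)).resolve_right (sub_ne_zero.mpr (Ne.symm h02))
        obtain ⟨c, s, hcs, hrot⟩ := rot2 (B 1 1) (B 1 2) (B 2 2)
        set R : M3 := !![1,0,0; 0,c,-s; 0,s,c] with hRdef
        have hRT : Rᵀ = !![1,0,0; 0,c,s; 0,-s,c] := by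
          ext i j; fin_cases i <;> fin_cases j <;> simp [hRdef, Matrix.vecHead, Matrix.vecTail]
        have hR : R * Rᵀ = 1 := by
          ext i j
          fin_cases i <;> fin_cases j <;>
            simp [hRdef, hRT, Matrix.mul_apply, Matrix.vecMul, dotProduct, Matrix.vecHead, Matrix.vecTail, Function.comp, Fin.sum_univ_three, Matrix.one_apply] <;>
            first
            | ring1
            | linear_combination hcs
        refine assemble u R hu hR ?_ ?_
        · rw [← hAdef, hdA]
          intro i j hij
          fin_cases i <;> fin_cases j <;>
            simp [hRdef, hRT, Matrix.mul_apply, Matrix.vecMul, dotProduct, Matrix.vecHead, Matrix.vecTail, Function.comp, Fin.sum_univ_three, Matrix.diagonal_apply] at hij ⊢ <;>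
            first
            | ring1
            | linear_combination (c * s) * h12
            | linear_combination (-(c * s)) * h12
        · rw [← hBdef]
          intro i j hij
          fin_cases i <;> fin_cases j
          · exact absurd rfl hij
          · simp [hRdef, hRT, Matrix.mul_apply, Matrix.vecMul, dotProduct, Matrix.vecHead, Matrix.vecTail, Function.comp, Fin.sum_univ_three, hB01, hB02, hBs 1 0, hBs 2 0]
          · simp [hRdef, hRT, Matrix.mul_apply, Matrix.vecMul, dotProduct, Matrix.vecHead, Matrix.vecTail, Function.comp, Fin.sum_univ_three, hB01, hB02, hBs 1 0, hBs 2 0]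
          · simp [hRdef, hRT, Matrix.mul_apply, Matrix.vecMul, dotProduct, Matrix.vecHead, Matrix.vecTail, Function.comp, Fin.sum_univ_three, hB01, hB02, hBs 1 0, hBs 2 0]
          · exact absurd rfl hij
          · simp [hRdef, hRT, Matrix.mul_apply, Matrix.vecMul, dotProduct, Matrix.vecHead, Matrix.vecTail, Function.comp, Fin.sum_univ_three]
            first
            | linear_combination hrot - s ^ 2 * hBs 2 1
            | linear_combination hrot + c ^ 2 * hBs 2 1
            | linear_combination hrot + s ^ 2 * hBs 2 1
            | linear_combination hrot - c ^ 2 * hBs 2 1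
          · simp [hRdef, hRT, Matrix.mul_apply, Matrix.vecMul, dotProduct, Matrix.vecHead, Matrix.vecTail, Function.comp, Fin.sum_univ_three, hB01, hB02, hBs 1 0, hBs 2 0]
          · simp [hRdef, hRT, Matrix.mul_apply, Matrix.vecMul, dotProduct, Matrix.vecHead, Matrix.vecTail, Function.comp, Fin.sum_univ_three]
            first
            | linear_combination hrot + c ^ 2 * hBs 2 1
            | linear_combination hrot - s ^ 2 * hBs 2 1
            | linear_combination hrot + s ^ 2 * hBs 2 1
            | linear_combination hrot - c ^ 2 * hBs 2 1
          · exact absurd rfl hij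
      · -- all eigenvalues distinct : B is already diagonal
        refine ⟨u, hu, ?_, ?_⟩
        · rw [← hAdef]; exact hda
        · rw [← hBdef]
          intro i j hij
          fin_cases i <;> fin_cases j
          · exact absurd rfl hij
          · exact (mul_eq_zero.mp (hkey 0 1)).resolve_right (sub_ne_zero.mpr (Ne.symm h01))
          · exact (mul_eq_zero.mp (hkey 0 2)).resolve_right (sub_ne_zero.mpr (Ne.symm h02))
          · exact (mul_eq_zero.mp (hkey 1 0)).resolve_right (sub_ne_zero.mpr h01)
          · exact absurd rfl hij
          · exact (mul_eq_zero.mp (hkey 1 2)).resolve_right (sub_ne_zero.mpr (Ne.symm h12))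
          · exact (mul_eq_zero.mp (hkey 2 0)).resolve_right (sub_ne_zero.mpr h02)
          · exact (mul_eq_zero.mp (hkey 2 1)).resolve_right (sub_ne_zero.mpr h12)
          · exact absurd rfl hij


lemma so3_upgrade {a b u : M3} (hu : u * uᵀ = 1) (hda : (uᵀ * a * u).IsDiag)
    (hdb : (uᵀ * b * u).IsDiag) :
    ∃ g ∈ SO3, (gᵀ * a * g).IsDiag ∧ (gᵀ * b * g).IsDiag := by
  have hdet : u.det = 1 ∨ u.det = -1 := by
    have h : u.det * u.det = 1 := by
      have := congrArg Matrix.det hu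
      rwa [Matrix.det_mul, Matrix.det_transpose, Matrix.det_one] at this
    rcases mul_self_eq_one_iff.mp h with h1 | h1
    · exact Or.inl h1
    · exact Or.inr h1
  rcases hdet with h1 | h1
  · exact ⟨u, ⟨hu, h1⟩, hda, hdb⟩
  · set E : M3 := diagonal ![1, 1, -1] with hE
    have hEt : Eᵀ = E := Matrix.diagonal_transpose _
    have hEE : E * E = 1 := by
      rw [hE, Matrix.diagonal_mul_diagonal]
      ext i j
      fin_cases i <;> fin_cases j <;> simp [Matrix.diagonal_apply, Matrix.one_apply]
    have hdetE : E.det = -1 := by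
      rw [hE, Matrix.det_diagonal, Fin.prod_univ_three]; norm_num; rfl
    refine ⟨u * E, ⟨?_, ?_⟩, ?_, ?_⟩
    · rw [transpose_mul, hEt]
      calc u * E * (E * uᵀ) = u * (E * E) * uᵀ := by simp only [Matrix.mul_assoc]
        _ = 1 := by rw [hEE, mul_one, hu]
    · rw [Matrix.det_mul, h1, hdetE]; norm_num
    · have heq : (u * E)ᵀ * a * (u * E) = E * (uᵀ * a * u) * E := by
        rw [transpose_mul, hEt]; simp only [Matrix.mul_assoc]
      rw [heq, hE]
      intro i j hij
      simp only [Matrix.diagonal_mul, Matrix.mul_diagonal]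
      rw [hda hij]; ring
    · have heq : (u * E)ᵀ * b * (u * E) = E * (uᵀ * b * u) * E := by
        rw [transpose_mul, hEt]; simp only [Matrix.mul_assoc]
      rw [heq, hE]
      intro i j hij
      simp only [Matrix.diagonal_mul, Matrix.mul_diagonal]
      rw [hdb hij]; ring


lemma isDiag_comm {A B : M3} (hA : A.IsDiag) (hB : B.IsDiag) : A * B = B * A := by
  ext i j
  rw [Matrix.mul_apply, Matrix.mul_apply]
  apply Finset.sum_congr rfl
  intro k _
  by_cases h1 : i = k
  · subst h1
    by_cases h2 : i = j
    · subst h2; ring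
    · rw [hB h2, hA h2]; ring
  · rw [hA h1, hB h1]; ring

lemma isDiag_mul {A B : M3} (hA : A.IsDiag) (hB : B.IsDiag) : (A * B).IsDiag := by
  intro i j hij
  rw [Matrix.mul_apply]
  apply Finset.sum_eq_zero
  intro k _
  by_cases h1 : i = k
  · subst h1; rw [hB hij]; ring
  · rw [hA h1]; ring

lemma conj_of_diag {a g : M3} (hg : g * gᵀ = 1) : a = g * (gᵀ * a * g) * gᵀ := by
  calc a = (g * gᵀ) * a * (g * gᵀ) := by rw [hg, one_mul, mul_one]
    _ = g * (gᵀ * a * g) * gᵀ := by simp only [Matrix.mul_assoc]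

lemma conj_mul_conj {g : M3} (hg' : gᵀ * g = 1) (X Y : M3) :
    (g * X * gᵀ) * (g * Y * gᵀ) = g * (X * Y) * gᵀ := by
  calc (g * X * gᵀ) * (g * Y * gᵀ) = g * (X * ((gᵀ * g) * (Y * gᵀ))) := by
        simp only [Matrix.mul_assoc]
    _ = g * (X * Y) * gᵀ := by rw [hg', one_mul]; simp only [Matrix.mul_assoc]

lemma comm_of_diag {a b g : M3} (hg : g * gᵀ = 1)
    (hda : (gᵀ * a * g).IsDiag) (hdb : (gᵀ * b * g).IsDiag) : a * b = b * a := by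
  have hg' : gᵀ * g = 1 := mul_eq_one_comm.mp hg
  have ea : a = g * (gᵀ * a * g) * gᵀ := conj_of_diag hg
  have eb : b = g * (gᵀ * b * g) * gᵀ := conj_of_diag hg
  calc a * b = (g * (gᵀ * a * g) * gᵀ) * (g * (gᵀ * b * g) * gᵀ) := by rw [← ea, ← eb]
    _ = g * ((gᵀ * a * g) * (gᵀ * b * g)) * gᵀ := conj_mul_conj hg' _ _
    _ = g * ((gᵀ * b * g) * (gᵀ * a * g)) * gᵀ := by rw [isDiag_comm hda hdb]
    _ = (g * (gᵀ * b * g) * gᵀ) * (g * (gᵀ * a * g) * gᵀ) := (conj_mul_conj hg' _ _).symm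
    _ = b * a := by rw [← ea, ← eb]

lemma exists_axis (α β : Fin 3 → ℝ)
    (hA : (α 1 - α 0) * ((α 2 - α 0) * (α 2 - α 1)) = 0)
    (hB : (β 1 - β 0) * ((β 2 - β 0) * (β 2 - β 1)) = 0)
    (hAB : (α 1 - α 0) * (β 2 - β 0) - (α 2 - α 0) * (β 1 - β 0) = 0) :
    ∃ k : Fin 3, (∀ i j, i ≠ k → j ≠ k → α i = α j) ∧ (∀ i j, i ≠ k → j ≠ k → β i = β j) := by
  by_cases h01 : α 0 = α 1
  · by_cases h02 : α 0 = α 2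
    · -- α constant : pick using β
      have hβ : β 0 = β 1 ∨ β 0 = β 2 ∨ β 1 = β 2 := by
        rcases mul_eq_zero.mp hB with h | h
        · left; linarith [sub_eq_zero.mp h]
        · rcases mul_eq_zero.mp h with h | h
          · right; left; linarith [sub_eq_zero.mp h]
          · right; right; linarith [sub_eq_zero.mp h]
      rcases hβ with h | h | h
      · exact ⟨2, fun i j hi hj => by fin_cases i <;> fin_cases j <;> simp_all,
          fun i j hi hj => by fin_cases i <;> fin_cases j <;> simp_all⟩
      · exact ⟨1, fun i j hi hj => by fin_cases i <;> fin_cases j <;> simp_all,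
          fun i j hi hj => by fin_cases i <;> fin_cases j <;> simp_all⟩
      · exact ⟨0, fun i j hi hj => by fin_cases i <;> fin_cases j <;> simp_all,
          fun i j hi hj => by fin_cases i <;> fin_cases j <;> simp_all⟩
    · -- α 0 = α 1 ≠ α 2
      have hb : β 0 = β 1 := by
        have h2 : (α 2 - α 0) * (β 1 - β 0) = 0 := by
          have : α 1 - α 0 = 0 := by linarith
          linear_combination -hAB + (β 2 - β 0) * this
        have := (mul_eq_zero.mp h2).resolve_left (sub_ne_zero.mpr (Ne.symm h02))
        linarith [this]
      exact ⟨2, fun i j hi hj => by fin_cases i <;> fin_cases j <;> simp_all,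
        fun i j hi hj => by fin_cases i <;> fin_cases j <;> simp_all⟩
  · by_cases h02 : α 0 = α 2
    · -- α 0 = α 2 ≠ α 1
      have hb : β 0 = β 2 := by
        have h2 : (α 1 - α 0) * (β 2 - β 0) = 0 := by
          have : α 2 - α 0 = 0 := by linarith
          linear_combination hAB + (β 1 - β 0) * this
        have := (mul_eq_zero.mp h2).resolve_left (sub_ne_zero.mpr (Ne.symm h01))
        linarith [this]
      exact ⟨1, fun i j hi hj => by fin_cases i <;> fin_cases j <;> simp_all,
        fun i j hi hj => by fin_cases i <;> fin_cases j <;> simp_all⟩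
    · -- α 1 = α 2 (forced), α 0 different
      have h12 : α 1 = α 2 := by
        rcases mul_eq_zero.mp hA with h | h
        · exact absurd (by linarith [sub_eq_zero.mp h] : α 0 = α 1) h01
        · rcases mul_eq_zero.mp h with h | h
          · exact absurd (by linarith [sub_eq_zero.mp h] : α 0 = α 2) h02
          · linarith [sub_eq_zero.mp h]
      have hb : β 1 = β 2 := by
        have h2 : (α 1 - α 0) * (β 2 - β 1) = 0 := by
          linear_combination hAB - (β 1 - β 0) * h12
        have := (mul_eq_zero.mp h2).resolve_left (sub_ne_zero.mpr (Ne.symm h01))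
        linarith [this]
      exact ⟨0, fun i j hi hj => by fin_cases i <;> fin_cases j <;> simp_all,
        fun i j hi hj => by fin_cases i <;> fin_cases j <;> simp_all⟩

lemma str_mul' (p q p' q' : ℝ) (n : Fin 3 → ℝ) (hn : n 0 ^ 2 + n 1 ^ 2 + n 2 ^ 2 = 1) :
    str p q n * str p' q' n = str (p * p') (p * q' + q * p' + q * q') n := by
  simp only [str, add_mul, mul_add, smul_mul_assoc, mul_smul_comm, one_mul, mul_one,
    vecMulVec_sq' n hn, smul_smul]
  module

lemma det3_str (p q p' q' : ℝ) (n x : Fin 3 → ℝ) :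
    det3 x ((str p q n).mulVec x) ((str p' q' n).mulVec x) = 0 := by
  simp only [det3_eq, str_mulVec]; ring

lemma conj_vecMulVec (g : M3) (n : Fin 3 → ℝ) :
    g * vecMulVec n n * gᵀ = vecMulVec (g.mulVec n) (g.mulVec n) := by
  ext i j
  simp [Matrix.mul_apply, vecMulVec, Fin.sum_univ_three, mulVec, dotProduct, transpose_apply]
  ring

lemma conj_str' (g : M3) (hg : g * gᵀ = 1) (p q : ℝ) (v : Fin 3 → ℝ) :
    g * str p q v * gᵀ = str p q (g.mulVec v) := by
  simp only [str, mul_add, add_mul, mul_smul_comm, smul_mul_assoc, mul_one, one_mul,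
    conj_vecMulVec, hg]

lemma conj_str (g : M3) (hg : g * gᵀ = 1) (p q : ℝ) (n : Fin 3 → ℝ)
    (hgn : g.mulVec n = n) : g * str p q n * gᵀ = str p q n := by
  rw [conj_str' g hg p q n, hgn]

lemma structured_of_fixed (a : M3) (ha : aᵀ = a) (n : Fin 3 → ℝ)
    (hn : n 0 ^ 2 + n 1 ^ 2 + n 2 ^ 2 = 1)
    (H : ∀ g ∈ SO3, g.mulVec n = n → g * a * gᵀ = a) : ∃ p q, a = str p q n := by
  have h2 := commutes_of_conj (g2_mem n hn).1 (H _ (g2_mem n hn) (g2_fix n hn))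
  have h90 := commutes_of_conj (g90_mem n hn).1 (H _ (g90_mem n hn) (g90_fix n hn))
  have hV : a * vecMulVec n n = vecMulVec n n * a := by
    simp only [str, mul_add, add_mul, mul_smul_comm, smul_mul_assoc, mul_one, one_mul] at h2
    have h2' := add_left_cancel h2
    exact smul_right_injective _ (by norm_num : (2 : ℝ) ≠ 0) h2'
  have hN : a * crossMat n = crossMat n * a := by
    rw [mul_add, add_mul, hV] at h90
    exact add_left_cancel h90
  exact structured_of_comm a ha n hn hV hN

lemma diag_mulVec_ones {D : M3} (hD : D.IsDiag) :
    D.mulVec ![1,1,1] = ![D 0 0, D 1 1, D 2 2] := by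
  have z01 : D 0 1 = 0 := hD (by decide)
  have z02 : D 0 2 = 0 := hD (by decide)
  have z10 : D 1 0 = 0 := hD (by decide)
  have z12 : D 1 2 = 0 := hD (by decide)
  have z20 : D 2 0 = 0 := hD (by decide)
  have z21 : D 2 1 = 0 := hD (by decide)
  funext i
  fin_cases i <;>
    simp [mulVec, dotProduct, Fin.sum_univ_three, z01, z02, z10, z12, z20, z21]

lemma diag_sq_mulVec {D : M3} (hD : D.IsDiag) :
    (D * D).mulVec ![1,1,1] = ![D 0 0 ^ 2, D 1 1 ^ 2, D 2 2 ^ 2] := by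
  have z01 : D 0 1 = 0 := hD (by decide)
  have z02 : D 0 2 = 0 := hD (by decide)
  have z10 : D 1 0 = 0 := hD (by decide)
  have z12 : D 1 2 = 0 := hD (by decide)
  have z20 : D 2 0 = 0 := hD (by decide)
  have z21 : D 2 1 = 0 := hD (by decide)
  funext i
  fin_cases i <;>
    simp [mulVec, dotProduct, Matrix.mul_apply, Fin.sum_univ_three,
      z01, z02, z10, z12, z20, z21] <;>
    ring

lemma col_unit {g : M3} (hg : g * gᵀ = 1) (k : Fin 3) :
    (∑ i, (fun i => g i k) i ^ 2) = 1 := by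
  have hg' : gᵀ * g = 1 := mul_eq_one_comm.mp hg
  have h := Matrix.ext_iff.2 hg' k k
  simp [Matrix.mul_apply, Matrix.one_apply, Fin.sum_univ_three, transpose_apply] at h
  simp only [Fin.sum_univ_three]
  linear_combination h

lemma recon (g DA : M3) (hg : g * gᵀ = 1) (k : Fin 3) (hd : DA.IsDiag)
    (hP : ∀ i j, i ≠ k → j ≠ k → DA i i = DA j j) :
    ∃ p q, g * DA * gᵀ = str p q (fun i => g i k) := by
  set i0 : Fin 3 := if k = 0 then 1 else 0 with hi0
  have hi0k : i0 ≠ k := by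
    fin_cases k <;> simp [hi0]
  set p := DA i0 i0 with hp
  set q := DA k k - p with hq
  have hstr : DA = str p q (Pi.single k 1) := by
    ext i j
    by_cases hij : i = j
    · subst hij
      by_cases hik : i = k
      · subst hik
        simp [str, vecMulVec_apply, Pi.single_apply, Matrix.one_apply, hq]
      · rw [hP i i0 hik hi0k, ← hp]
        simp [str, vecMulVec_apply, Pi.single_apply, Matrix.one_apply, hik]
    · rw [hd hij]
      by_cases hik : i = k
      · have hjk : j ≠ k := fun h => hij (by rw [hik, h])
        simp [str, vecMulVec_apply, Pi.single_apply, Matrix.one_apply, hij, hjk]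
      · simp [str, vecMulVec_apply, Pi.single_apply, Matrix.one_apply, hij, hik]
    
  refine ⟨p, q, ?_⟩
  rw [hstr, conj_str' g hg]
  congr 1
  funext i
  simp [mulVec, dotProduct, Pi.single_apply, Finset.sum_ite_eq]

end PairOrthotropic

open PairOrthotropic in
/-- A pair `(a, b)` of real symmetric `3 × 3` matrices is orthotropic
(simultaneously diagonalizable by a rotation, but not at least transversely isotropic)
iff `a` and `b` commute and at least one of the generalized cross products
`a × a²`, `b × b²`, `a × b` is nonzero. -/
theorem pair_orthotropic_iff
    (a b : Matrix (Fin 3) (Fin 3) ℝ) (ha : aᵀ = a) (hb : bᵀ = b) :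
    ((∃ g ∈ SO3, (gᵀ * a * g).IsDiag ∧ (gᵀ * b * g).IsDiag) ∧
      ¬ ∃ n : Fin 3 → ℝ, (∑ i, n i ^ 2) = 1 ∧
        ∀ g ∈ SO3, g.mulVec n = n → g * a * gᵀ = a ∧ g * b * gᵀ = b) ↔
    (a * b = b * a ∧
      ((∃ x : Fin 3 → ℝ, det3 x (a.mulVec x) ((a * a).mulVec x) ≠ 0) ∨
       (∃ x : Fin 3 → ℝ, det3 x (b.mulVec x) ((b * b).mulVec x) ≠ 0) ∨
       (∃ x : Fin 3 → ℝ, det3 x (a.mulVec x) (b.mulVec x) ≠ 0))) := by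
  constructor
  · rintro ⟨⟨g, ⟨hg, hdet⟩, hda, hdb⟩, hniso⟩
    refine ⟨comm_of_diag hg hda hdb, ?_⟩
    by_contra hall
    push_neg at hall
    obtain ⟨h1, h2, h3⟩ := hall
    set DA := gᵀ * a * g with hDA
    set DB := gᵀ * b * g with hDB
    have hg' : gᵀ * g = 1 := mul_eq_one_comm.mp hg
    have hag : a * g = g * DA := by
      rw [hDA]
      calc a * g = (g * gᵀ) * (a * g) := by rw [hg, one_mul]
        _ = g * (gᵀ * a * g) := by simp only [Matrix.mul_assoc]
    have hbg : b * g = g * DB := by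
      rw [hDB]
      calc b * g = (g * gᵀ) * (b * g) := by rw [hg, one_mul]
        _ = g * (gᵀ * b * g) := by simp only [Matrix.mul_assoc]
    have haag : (a * a) * g = g * (DA * DA) := by
      calc (a * a) * g = a * (a * g) := by rw [mul_assoc]
        _ = a * (g * DA) := by rw [hag]
        _ = (a * g) * DA := by rw [← mul_assoc]
        _ = (g * DA) * DA := by rw [hag]
        _ = g * (DA * DA) := by rw [mul_assoc]
    have hbbg : (b * b) * g = g * (DB * DB) := by
      calc (b * b) * g = b * (b * g) := by rw [mul_assoc]
        _ = b * (g * DB) := by rw [hbg]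
        _ = (b * g) * DB := by rw [← mul_assoc]
        _ = (g * DB) * DB := by rw [hbg]
        _ = g * (DB * DB) := by rw [mul_assoc]
    have key : ∀ (P P' Q Q' : M3), P * g = g * P' → Q * g = g * Q' →
        (∀ x, det3 x (P.mulVec x) (Q.mulVec x) = 0) →
        ∀ y, det3 y (P'.mulVec y) (Q'.mulVec y) = 0 := by
      intro P P' Q Q' hP hQ h0 y
      have e1 : P.mulVec (g.mulVec y) = g.mulVec (P'.mulVec y) := by
        rw [Matrix.mulVec_mulVec, hP, ← Matrix.mulVec_mulVec]
      have e2 : Q.mulVec (g.mulVec y) = g.mulVec (Q'.mulVec y) := by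
        rw [Matrix.mulVec_mulVec, hQ, ← Matrix.mulVec_mulVec]
      have h4 := h0 (g.mulVec y)
      rw [e1, e2, det3_mulVec, hdet, one_mul] at h4
      exact h4
    have k1 := key a DA (a * a) (DA * DA) hag haag h1
    have k2 := key b DB (b * b) (DB * DB) hbg hbbg h2
    have k3 := key a DA b DB hag hbg h3
    have hA : (DA 1 1 - DA 0 0) * ((DA 2 2 - DA 0 0) * (DA 2 2 - DA 1 1)) = 0 := by
      have e := k1 ![1,1,1]
      rw [diag_mulVec_ones hda, diag_sq_mulVec hda, det3_eq] at e
      simp at e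
      linear_combination e
    have hB : (DB 1 1 - DB 0 0) * ((DB 2 2 - DB 0 0) * (DB 2 2 - DB 1 1)) = 0 := by
      have e := k2 ![1,1,1]
      rw [diag_mulVec_ones hdb, diag_sq_mulVec hdb, det3_eq] at e
      simp at e
      linear_combination e
    have hAB : (DA 1 1 - DA 0 0) * (DB 2 2 - DB 0 0)
        - (DA 2 2 - DA 0 0) * (DB 1 1 - DB 0 0) = 0 := by
      have e := k3 ![1,1,1]
      rw [diag_mulVec_ones hda, diag_mulVec_ones hdb, det3_eq] at e
      simp at e
      linear_combination e
    obtain ⟨k, hPα, hPβ⟩ := exists_axis (fun i => DA i i) (fun i => DB i i) hA hB hAB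
    obtain ⟨p, q, hpq⟩ := recon g DA hg k hda hPα
    obtain ⟨r, s, hrs⟩ := recon g DB hg k hdb hPβ
    have ha' : a = str p q (fun i => g i k) := by
      rw [conj_of_diag (a := a) hg, ← hDA, hpq]
    have hb' : b = str r s (fun i => g i k) := by
      rw [conj_of_diag (a := b) hg, ← hDB, hrs]
    apply hniso
    refine ⟨fun i => g i k, col_unit hg k, ?_⟩
    intro h hmem hfix
    exact ⟨by rw [ha']; exact conj_str h hmem.1 p q _ hfix,
      by rw [hb']; exact conj_str h hmem.1 r s _ hfix⟩
  · rintro ⟨hcomm, hdisj⟩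
    constructor
    · obtain ⟨u, hu, hdau, hdbu⟩ := simul_diag_orth a b ha hb hcomm
      exact so3_upgrade hu hdau hdbu
    · rintro ⟨n, hn, H⟩
      have hn' : n 0 ^ 2 + n 1 ^ 2 + n 2 ^ 2 = 1 := by
        simpa [Fin.sum_univ_three] using hn
      obtain ⟨p, q, hA⟩ := structured_of_fixed a ha n hn' (fun g hg hgn => (H g hg hgn).1)
      obtain ⟨r, s, hB⟩ := structured_of_fixed b hb n hn' (fun g hg hgn => (H g hg hgn).2)
      rcases hdisj with ⟨x, hx⟩ | ⟨x, hx⟩ | ⟨x, hx⟩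
      · apply hx
        rw [hA, str_mul' p q p q n hn']
        exact det3_str _ _ _ _ n x
      · apply hx
        rw [hB, str_mul' r s r s n hn']
        exact det3_str _ _ _ _ n x
      · apply hx
        rw [hA, hB]
        exact det3_str _ _ _ _ n x
end

section
/- Let c be a real symmetric 3×3 matrix with three pairwise distinct eigenvalues (orthotropic) and let p be a harmonic homogeneous polynomial of degree 4 in three real variables (Δp = 0), representing a fourth-order harmonic tensor H. For a symmetric matrix m, let q_m denote the quadratic polynomial q_m(x) := Σ_{k,l} m_{kl}·(∂ₖ∂ₗ p)(x), which represents the second-order covariant H : m (up to a constant factor). Then for every g ∈ SO(3): [g c gᵀ = c and g fixes q_c and g fixes q_{c²}] holds if and only if [g fixes p and g c gᵀ = c]; in other words the stabilizer of the triple (c, H:c, H:c²) equals the stabilizer of the pair (H, c). -/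
open Matrix MvPolynomial

/-- The Laplacian of a polynomial in three variables. -/
noncomputable def lap (p : MvPolynomial (Fin 3) ℝ) : MvPolynomial (Fin 3) ℝ :=
  ∑ i, pderiv i (pderiv i p)

/-- The quadratic polynomial `q_m(x) = Σ_{k,l} m_{kl} (∂ₖ∂ₗ p)(x)`, realizing the
second-order covariant `H : m` up to a constant factor. -/
noncomputable def qm (p : MvPolynomial (Fin 3) ℝ) (m : Matrix (Fin 3) (Fin 3) ℝ) :
    MvPolynomial (Fin 3) ℝ :=
  ∑ k, ∑ l, C (m k l) * pderiv k (pderiv l p)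

/-- `g ∈ SO(3)` fixes the polynomial `q`, i.e. `q(g⁻¹·x) = q(x)` for all `x`. -/
def fixesPoly (g : Matrix (Fin 3) (Fin 3) ℝ) (q : MvPolynomial (Fin 3) ℝ) : Prop :=
  ∀ x : Fin 3 → ℝ, eval (g⁻¹.mulVec x) q = eval x q

/-! If `g` fixes `c`, the covariance `q_m(g ⋆ p) = g ⋆ q_{gᵀ m g}(p)` shows that `r := g ⋆ p - p`
is a harmonic quartic with `q_m(r) = 0` for `m = 1, c, c²`. Since `c` has simple spectrum,
Lagrange interpolation writes every spectral projector `u uᵀ` of `c` as a polynomial of degree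
at most `2` in `c`, so `(u · ∇)² r = 0` along an orthonormal eigenbasis. In those coordinates `r`
has degree at most one in each of the three variables, which a nonzero homogeneous polynomial
of degree `4 > 3` cannot. -/

section LinearSubst

variable {σ R : Type*} [Fintype σ] [CommRing R]

noncomputable def linearSubst (A : Matrix σ σ R) : MvPolynomial σ R →ₐ[R] MvPolynomial σ R :=
  bind₁ A.toMvPolynomial

lemma linearSubst_X (A : Matrix σ σ R) (i : σ) :
    linearSubst A (X i) = ∑ j, C (A i j) * X j := by
  simp [linearSubst, Matrix.toMvPolynomial, C_mul_X_eq_monomial]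

lemma eval_linearSubst (A : Matrix σ σ R) (q : MvPolynomial σ R) (x : σ → R) :
    eval x (linearSubst A q) = eval (A *ᵥ x) q := by
  simp only [linearSubst, eval, eval₂Hom_bind₁]
  simp [← eval.eq_1, Matrix.toMvPolynomial_eval_eq_apply]

lemma linearSubst_mul (A B : Matrix σ σ R) (q : MvPolynomial σ R) :
    linearSubst (A * B) q = linearSubst B (linearSubst A q) := by
  simp only [linearSubst, bind₁_bind₁]
  congr
  funext i
  exact A.toMvPolynomial_mul B i

lemma linearSubst_one [DecidableEq σ] (q : MvPolynomial σ R) : linearSubst 1 q = q := by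
  simp [linearSubst]

lemma MvPolynomial.IsHomogeneous.linearSubst {q : MvPolynomial σ R} {n : ℕ}
    (hq : q.IsHomogeneous n) (A : Matrix σ σ R) : (linearSubst A q).IsHomogeneous n := by
  have := hq.aeval _ A.toMvPolynomial_isHomogeneous
  rwa [one_mul] at this

lemma pderiv_linearSubst (A : Matrix σ σ R) (k : σ) (q : MvPolynomial σ R) :
    pderiv k (linearSubst A q) = ∑ i, C (A i k) * linearSubst A (pderiv i q) := by
  classical
  induction q using MvPolynomial.induction_on with
  | C a => simp [linearSubst]
  | add f g hf hg => simp only [map_add, hf, hg, mul_add, Finset.sum_add_distrib]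
  | mul_X f j hf =>
    have hX : pderiv k (linearSubst A (X j)) = C (A j k) := by
      simp [linearSubst_X, pderiv_X, Pi.single_apply]
    simp only [map_mul, pderiv_mul, hf, hX, pderiv_X, Pi.single_apply, mul_ite, mul_one, mul_zero,
      map_add, mul_add, Finset.sum_add_distrib, Finset.sum_mul]
    congr 1
    · exact Finset.sum_congr rfl fun i _ => mul_assoc _ _ _
    · simp [mul_comm, apply_ite (linearSubst A)]

lemma linearSubst_C (A : Matrix σ σ R) (r : R) : linearSubst A (C r) = C r :=
  bind₁_C_right _ _

lemma pderiv_pderiv_linearSubst (A : Matrix σ σ R) (k l : σ) (q : MvPolynomial σ R) :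
    pderiv k (pderiv l (linearSubst A q)) =
      ∑ i, ∑ j, C (A i k * A j l) * linearSubst A (pderiv i (pderiv j q)) := by
  rw [Finset.sum_comm]
  simp only [pderiv_linearSubst, map_sum, pderiv_C_mul, Finset.mul_sum]
  refine Finset.sum_congr rfl fun j _ => Finset.sum_congr rfl fun i _ => ?_
  rw [map_mul]
  ring

end LinearSubst

lemma MvPolynomial.eq_zero_of_pderiv_pderiv_eq_zero {σ R : Type*} [Fintype σ] [CommSemiring R]
    [NoZeroDivisors R] [CharZero R] {s : MvPolynomial σ R} {n : ℕ} (hs : s.IsHomogeneous n)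
    (hn : Fintype.card σ < n) (h : ∀ k, pderiv k (pderiv k s) = 0) : s = 0 := by
  ext d
  rw [coeff_zero]
  by_contra hd
  have hdeg : ∑ k, d k = n := by
    rw [← Finsupp.degree_eq_sum, Finsupp.degree_eq_weight_one]; exact hs hd
  obtain ⟨k, hk⟩ : ∃ k, 2 ≤ d k := by
    by_contra! hle
    have : ∑ k, d k ≤ ∑ _k : σ, 1 := Finset.sum_le_sum fun k _ => Nat.le_of_lt_succ (hle k)
    simp only [Finset.sum_const, Finset.card_univ, smul_eq_mul, mul_one] at this
    omega
  obtain ⟨e, rfl⟩ : ∃ e, d = e + Finsupp.single k 2 :=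
    ⟨d - Finsupp.single k 2, (tsub_add_cancel_of_le (Finsupp.single_le_iff.mpr hk)).symm⟩
  have hcoeff := congrArg (coeff e) (h k)
  rw [coeff_pderiv, coeff_pderiv, add_assoc, ← Finsupp.single_add, coeff_zero] at hcoeff
  simp only [Nat.reduceAdd, mul_eq_zero, Nat.cast_add_one_ne_zero, or_false] at hcoeff
  exact hd hcoeff

lemma aeval_diagonal {n R : Type*} [Fintype n] [DecidableEq n] [CommSemiring R] (d : n → R)
    (P : Polynomial R) : Polynomial.aeval (diagonal d) P = diagonal fun i => P.eval (d i) := by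
  rw [← diagonalAlgHom_apply (R := R), Polynomial.aeval_algHom_apply, Polynomial.aeval_pi_apply]
  simp

lemma Matrix.IsHermitian.injective_eigenvalues_of_ncard_spectrum {n 𝕜 : Type*} [Fintype n]
    [DecidableEq n] [RCLike 𝕜] {c : Matrix n n 𝕜} (hc : c.IsHermitian)
    (h : (spectrum ℝ c).ncard = Fintype.card n) : Function.Injective hc.eigenvalues := by
  rw [hc.spectrum_real_eq_range_eigenvalues, ← Set.image_univ] at h
  exact Set.injOn_univ.mp (Set.injOn_of_ncard_image_eq (by simpa using h))

lemma aeval_lagrangeBasis_eigenvalues {n : Type*} [Fintype n] [DecidableEq n]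
    {c : Matrix n n ℝ} (hc : c.IsHermitian) (hinj : Function.Injective hc.eigenvalues) (k : n) :
    Polynomial.aeval c (Lagrange.basis Finset.univ hc.eigenvalues k) =
      Unitary.conjStarAlgAut ℝ _ hc.eigenvectorUnitary (diagonal (Pi.single k 1)) := by
  have hbasis : (fun j => (Lagrange.basis Finset.univ hc.eigenvalues k).eval (hc.eigenvalues j))
      = Pi.single k 1 := by
    funext j
    rcases eq_or_ne j k with rfl | hjk
    · simp [Lagrange.eval_basis_self hinj.injOn]
    · simp [Lagrange.eval_basis_of_ne hjk.symm, hjk]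
  rw [congrArg (Polynomial.aeval · _) hc.spectral_theorem, Polynomial.aeval_algHom_apply]
  simp [aeval_diagonal, hbasis]

lemma qm_linearSubst (A m : Matrix (Fin 3) (Fin 3) ℝ) (q : MvPolynomial (Fin 3) ℝ) :
    qm (linearSubst A q) m = linearSubst A (qm q (A * m * Aᵀ)) := by
  simp only [qm, pderiv_pderiv_linearSubst, mul_apply, transpose_apply, map_mul,
    linearSubst_C, Fin.sum_univ_three, map_add]
  ring

@[simps]
noncomputable def qmLinearMap (p : MvPolynomial (Fin 3) ℝ) :
    Matrix (Fin 3) (Fin 3) ℝ →ₗ[ℝ] MvPolynomial (Fin 3) ℝ where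
  toFun := qm p
  map_add' m n := by simp only [qm, Matrix.add_apply, map_add, add_mul, Finset.sum_add_distrib]
  map_smul' a m := by
    simp only [qm, Matrix.smul_apply, smul_eq_mul, C_mul', mul_smul, ← Finset.smul_sum,
      RingHom.id_apply]

lemma qm_sub (p p' : MvPolynomial (Fin 3) ℝ) (m : Matrix (Fin 3) (Fin 3) ℝ) :
    qm (p - p') m = qm p m - qm p' m := by
  simp only [qm, map_sub, mul_sub, Finset.sum_sub_distrib]

lemma qm_diagonal (p : MvPolynomial (Fin 3) ℝ) (d : Fin 3 → ℝ) :
    qm p (diagonal d) = ∑ k, C (d k) * pderiv k (pderiv k p) := by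
  simp [qm, diagonal_apply, apply_ite C]

lemma qm_one (p : MvPolynomial (Fin 3) ℝ) : qm p 1 = lap p := by
  simp [← diagonal_one, qm_diagonal, lap]

lemma qm_diagonal_single (p : MvPolynomial (Fin 3) ℝ) (k : Fin 3) :
    qm p (diagonal (Pi.single k 1)) = pderiv k (pderiv k p) := by
  simp [qm_diagonal, Pi.single_apply, apply_ite C]

lemma qm_aeval_eq_zero {p : MvPolynomial (Fin 3) ℝ} {c : Matrix (Fin 3) (Fin 3) ℝ}
    (h0 : qm p 1 = 0) (h1 : qm p c = 0) (h2 : qm p (c * c) = 0) {P : Polynomial ℝ}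
    (hP : P.natDegree < 3) : qm p (Polynomial.aeval c P) = 0 := by
  rw [← qmLinearMap_apply, Polynomial.aeval_eq_sum_range' hP, map_sum]
  simp [Finset.sum_range_succ, sq, h0, h1, h2]

lemma qm_linearSubst_unitary (u : unitary (Matrix (Fin 3) (Fin 3) ℝ))
    (p : MvPolynomial (Fin 3) ℝ) (m : Matrix (Fin 3) (Fin 3) ℝ) :
    qm (linearSubst u p) m = linearSubst u (qm p (Unitary.conjStarAlgAut ℝ _ u m)) := by
  rw [qm_linearSubst, Unitary.conjStarAlgAut_apply, star_eq_conjTranspose,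
    conjTranspose_eq_transpose_of_trivial]

lemma fixesPoly_iff (g : Matrix (Fin 3) (Fin 3) ℝ) (q : MvPolynomial (Fin 3) ℝ) :
    fixesPoly g q ↔ linearSubst g⁻¹ q = q := by
  simp only [fixesPoly, ← eval_linearSubst]
  exact ⟨MvPolynomial.funext, fun h x => by rw [h]⟩

lemma eq_zero_of_lap_eq_zero_of_qm_eq_zero {c : Matrix (Fin 3) (Fin 3) ℝ} (hc : c.IsHermitian)
    (hinj : Function.Injective hc.eigenvalues) {r : MvPolynomial (Fin 3) ℝ} {n : ℕ}
    (hr : r.IsHomogeneous n) (hn : 3 < n) (hlap : lap r = 0) (h1 : qm r c = 0)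
    (h2 : qm r (c * c) = 0) : r = 0 := by
  set U := hc.eigenvectorUnitary
  have hUr : linearSubst U r = 0 := by
    refine eq_zero_of_pderiv_pderiv_eq_zero (hr.linearSubst _) (by simpa using hn) fun k => ?_
    have hdeg : (Lagrange.basis Finset.univ hc.eigenvalues k).natDegree < 3 := by
      rw [Lagrange.natDegree_basis hinj.injOn (Finset.mem_univ k)]; simp
    rw [← qm_diagonal_single, qm_linearSubst_unitary, ← aeval_lagrangeBasis_eigenvalues hc hinj,
      qm_aeval_eq_zero (by rwa [qm_one]) h1 h2 hdeg, map_zero]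
  simpa [← linearSubst_mul, linearSubst_one] using
    congrArg (linearSubst (star U : Matrix _ _ ℝ)) hUr

lemma linearSubst_qm_of_conj_eq {u : unitary (Matrix (Fin 3) (Fin 3) ℝ)}
    {m : Matrix (Fin 3) (Fin 3) ℝ} (hm : Unitary.conjStarAlgAut ℝ _ u m = m)
    (p : MvPolynomial (Fin 3) ℝ) : linearSubst u (qm p m) = qm (linearSubst u p) m := by
  rw [qm_linearSubst_unitary, hm]

lemma linearSubst_eq_self_iff_qm {c : Matrix (Fin 3) (Fin 3) ℝ} (hc : c.IsHermitian)
    (hinj : Function.Injective hc.eigenvalues) {p : MvPolynomial (Fin 3) ℝ}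
    (hp : p.IsHomogeneous 4) (hharm : lap p = 0) {u : unitary (Matrix (Fin 3) (Fin 3) ℝ)}
    (hu : Unitary.conjStarAlgAut ℝ _ u c = c) :
    linearSubst u p = p ↔
      linearSubst u (qm p c) = qm p c ∧ linearSubst u (qm p (c * c)) = qm p (c * c) := by
  have hu2 : Unitary.conjStarAlgAut ℝ _ u (c * c) = c * c := by rw [map_mul, hu]
  constructor
  · intro hfix
    rw [linearSubst_qm_of_conj_eq hu, linearSubst_qm_of_conj_eq hu2, hfix]
    exact ⟨rfl, rfl⟩
  · rintro ⟨h1, h2⟩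
    have hqm : ∀ m, Unitary.conjStarAlgAut ℝ _ u m = m →
        qm (linearSubst u p - p) m = linearSubst u (qm p m) - qm p m := fun m hm => by
      rw [qm_sub, linearSubst_qm_of_conj_eq hm]
    rw [← sub_eq_zero]
    refine eq_zero_of_lap_eq_zero_of_qm_eq_zero hc hinj ((hp.linearSubst u).sub hp) (by norm_num)
      ?_ (by rw [hqm c hu, h1, sub_self]) (by rw [hqm _ hu2, h2, sub_self])
    rw [← qm_one, hqm 1 (map_one _), qm_one, hharm, map_zero, sub_zero]

/-- Let `c` be an orthotropic real symmetric `3 × 3` matrix (three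
pairwise distinct eigenvalues) and `p` a harmonic homogeneous degree-4 polynomial
representing a fourth-order harmonic tensor `H`. Then for every `g ∈ SO(3)`:
`g` stabilizes the triple `(c, H:c, H:c²)` iff `g` stabilizes the pair `(H, c)`. -/
theorem stabilizer_of_triple_eq_stabilizer_of_pair
    (c : Matrix (Fin 3) (Fin 3) ℝ) (hc : cᵀ = c) (hc3 : (spectrum ℝ c).ncard = 3)
    (p : MvPolynomial (Fin 3) ℝ) (hp : p.IsHomogeneous 4) (hharm : lap p = 0) :
    ∀ g ∈ SO3,
      ((g * c * gᵀ = c ∧ fixesPoly g (qm p c) ∧ fixesPoly g (qm p (c * c))) ↔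
        (fixesPoly g p ∧ g * c * gᵀ = c)) := by
  intro g hg
  have hherm : c.IsHermitian := by rw [IsHermitian, conjTranspose_eq_transpose_of_trivial, hc]
  have hinj := hherm.injective_eigenvalues_of_ncard_spectrum hc3
  let u : unitary (Matrix (Fin 3) (Fin 3) ℝ) :=
    ⟨g, mem_unitaryGroup_iff.mpr (by simpa [star_eq_conjTranspose] using hg.1)⟩
  have hstar : (star u : Matrix (Fin 3) (Fin 3) ℝ) = gᵀ := by simp [u, star_eq_conjTranspose]
  have hinv : g⁻¹ = (star u : Matrix (Fin 3) (Fin 3) ℝ) := hstar ▸ inv_eq_right_inv hg.1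
  have hconj : g * c * gᵀ = c ↔ Unitary.conjStarAlgAut ℝ _ (star u) c = c := by
    rw [← Unitary.conjStarAlgAut_symm, StarAlgEquiv.symm_apply_eq, eq_comm]
    simp [u, star_eq_conjTranspose]
  simp only [fixesPoly_iff, hinv, hconj]
  constructor
  · rintro ⟨hgc, hq⟩
    exact ⟨(linearSubst_eq_self_iff_qm hherm hinj hp hharm hgc).2 hq, hgc⟩
  · rintro ⟨hfix, hgc⟩
    exact ⟨hgc, (linearSubst_eq_self_iff_qm hherm hinj hp hharm hgc).1 hfix⟩
end

section
/- For every natural number n, the complex-linear map φ* from the space of harmonic homogeneous polynomials of degree n in three complex variables (polynomials p ∈ ℂ[x,y,z], homogeneous of degree n, with Δp = ∂ₓ²p + ∂_y²p + ∂_z²p = 0) to the space of binary forms of degree 2n (homogeneous polynomials of degree 2n in two variables u, v over ℂ), defined by (φ*p)(u,v) := p((u² + v²)/2, (u² − v²)/(2i), i·u·v), is well defined (φ*p is homogeneous of degree 2n) and is a linear isomorphism (bijective). -/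
open MvPolynomial

/-- The pullback `φ*` along the Cartan map: substitute
`(x, y, z) ↦ ((u² + v²)/2, (u² − v²)/(2i), i·u·v)` in a polynomial of three complex
variables, producing a polynomial in the two variables `u = X 0`, `v = X 1`. -/
noncomputable def cartanPullback (p : MvPolynomial (Fin 3) ℂ) : MvPolynomial (Fin 2) ℂ :=
  aeval
    ![C ((1 : ℂ) / 2) * (X 0 ^ 2 + X 1 ^ 2),
      C ((1 : ℂ) / (2 * Complex.I)) * (X 0 ^ 2 - X 1 ^ 2),
      C Complex.I * (X 0 * X 1)] p

/-!
In the null coordinates `s = x + iy`, `t = x − iy` the Laplacian becomes `4 ∂s∂t + ∂z²` and `φ*`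
becomes `p ↦ p(u², v², iuv)`, which sends `s^a t^b z^c` to a multiple of `u^(2a+c) v^(2b+c)`.
The exponents with a given image form a chain `(a, b, c), (a - 1, b - 1, c + 2), …`, and
harmonicity says exactly that `i^c 4^a a! b! c!` times the coefficient of `s^a t^b z^c` is
constant along each chain. So the coefficient of `u^j v^k` in `φ* p` is this constant times the
positive number `∑ 1 / (4^a a! b! c!)` over the chain: `φ* p` determines `p`, and prescribing the
constants produces every binary form of even degree.
-/

open Finset
open Complex (I)

theorem Finsupp.weight_one_eq_sum {σ : Type*} [Fintype σ] (d : σ →₀ ℕ) :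
    Finsupp.weight 1 d = ∑ i, d i := by
  simp [Finsupp.weight_apply, Finsupp.sum_fintype]

namespace MvPolynomial

variable {R σ τ : Type*}

theorem pderiv_pderiv_comm [CommRing R] (i j : σ) (p : MvPolynomial σ R) :
    pderiv i (pderiv j p) = pderiv j (pderiv i p) := by
  classical
  have h : ⁅pderiv i, pderiv j⁆ = (0 : Derivation R (MvPolynomial σ R) (MvPolynomial σ R)) :=
    derivation_ext fun k => by
      rw [Derivation.commutator_apply, pderiv_X, pderiv_X]
      simp [Pi.single_apply, apply_ite]
  simpa [Derivation.commutator_apply, sub_eq_zero] using DFunLike.congr_fun h p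

theorem pderiv_aeval [CommSemiring R] [Fintype σ] (f : σ → MvPolynomial τ R) (i : τ)
    (p : MvPolynomial σ R) :
    pderiv i (aeval f p) = ∑ j, aeval f (pderiv j p) * pderiv i (f j) := by
  classical
  induction p using MvPolynomial.induction_on with
  | C a => simp
  | add p q hp hq => simp only [map_add, hp, hq, add_mul, sum_add_distrib]
  | mul_X p j hp =>
    simp only [map_mul, aeval_X, Derivation.leibniz, hp, pderiv_X, smul_eq_mul, map_add,
      add_mul, sum_add_distrib, mul_sum, Pi.single_apply, mul_ite, mul_one, mul_zero,
      map_zero, apply_ite (aeval f), ite_mul, zero_mul, sum_ite_eq, mem_univ, if_true, mul_assoc]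

theorem exists_coeff_eq [CommSemiring R] (f : (σ →₀ ℕ) → R) (s : Finset (σ →₀ ℕ))
    (hf : ∀ d, f d ≠ 0 → d ∈ s) : ∃ p : MvPolynomial σ R, ∀ d, coeff d p = f d :=
  ⟨.ofCoeff (Finsupp.onFinset s f hf), fun _ => rfl⟩

theorem IsHomogeneous.sum_eq [CommSemiring R] [Fintype σ] {p : MvPolynomial σ R} {n : ℕ}
    (hp : p.IsHomogeneous n) {d : σ →₀ ℕ} (hd : coeff d p ≠ 0) : ∑ i, d i = n :=
  Finsupp.weight_one_eq_sum d ▸ hp hd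

end MvPolynomial

namespace Cartan

noncomputable section

/-- `p ↦ p(x + iy, x − iy, z)`: a polynomial in the null coordinates `s = x + iy`, `t = x − iy`,
`z`, written in the coordinates `x, y, z`. -/
def ofNull : MvPolynomial (Fin 3) ℂ →ₐ[ℂ] MvPolynomial (Fin 3) ℂ :=
  aeval ![X 0 + C I * X 1, X 0 - C I * X 1, X 2]

def toNull : MvPolynomial (Fin 3) ℂ →ₐ[ℂ] MvPolynomial (Fin 3) ℂ :=
  aeval ![C (1 / 2) * (X 0 + X 1), C (1 / (2 * I)) * (X 0 - X 1), X 2]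

def nullLaplacian (p : MvPolynomial (Fin 3) ℂ) : MvPolynomial (Fin 3) ℂ :=
  C 4 * pderiv 0 (pderiv 1 p) + pderiv 2 (pderiv 2 p)

/-- `p ↦ p(u², v², iuv)`: in the null coordinates the Cartan map reads `s = u²`, `t = v²`. -/
def nullCartanPullback : MvPolynomial (Fin 3) ℂ →ₐ[ℂ] MvPolynomial (Fin 2) ℂ :=
  aeval ![X 0 ^ 2, X 1 ^ 2, C I * (X 0 * X 1)]

theorem toNull_comp_ofNull : toNull.comp ofNull = AlgHom.id ℂ _ := by
  ext1 i
  fin_cases i <;> simp [ofNull, toNull, C_mul', smul_smul] <;> match_scalars <;> ring_nf <;>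
    norm_num [Complex.I_sq]

theorem ofNull_comp_toNull : ofNull.comp toNull = AlgHom.id ℂ _ := by
  ext1 i
  fin_cases i <;> simp [ofNull, toNull, C_mul', smul_smul] <;> match_scalars <;> field_simp <;>
    norm_num [Complex.I_sq]

theorem toNull_ofNull (p : MvPolynomial (Fin 3) ℂ) : toNull (ofNull p) = p :=
  DFunLike.congr_fun toNull_comp_ofNull p

theorem ofNull_toNull (p : MvPolynomial (Fin 3) ℂ) : ofNull (toNull p) = p :=
  DFunLike.congr_fun ofNull_comp_toNull p

theorem isHomogeneous_ofNull {p : MvPolynomial (Fin 3) ℂ} {n : ℕ} (hp : p.IsHomogeneous n) :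
    (ofNull p).IsHomogeneous n := by
  rw [ofNull, ← one_mul n]
  refine hp.aeval _ fun i => ?_
  fin_cases i
  · exact (isHomogeneous_X _ _).add ((isHomogeneous_X _ _).C_mul _)
  · exact (isHomogeneous_X _ _).sub ((isHomogeneous_X _ _).C_mul _)
  · exact isHomogeneous_X _ _

theorem isHomogeneous_toNull {p : MvPolynomial (Fin 3) ℂ} {n : ℕ} (hp : p.IsHomogeneous n) :
    (toNull p).IsHomogeneous n := by
  rw [toNull, ← one_mul n]
  refine hp.aeval _ fun i => ?_
  fin_cases i
  · exact ((isHomogeneous_X _ _).add (isHomogeneous_X _ _)).C_mul _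
  · exact ((isHomogeneous_X _ _).sub (isHomogeneous_X _ _)).C_mul _
  · exact isHomogeneous_X _ _

theorem cartanPullback_ofNull (p : MvPolynomial (Fin 3) ℂ) :
    cartanPullback (ofNull p) = nullCartanPullback p := by
  rw [cartanPullback, ← AlgHom.comp_apply]
  congr 1
  ext1 i
  fin_cases i <;> simp [ofNull, nullCartanPullback, C_mul', smul_smul] <;> match_scalars <;>
    ring_nf <;> norm_num [Complex.I_sq]

theorem pderiv_zero_ofNull (p : MvPolynomial (Fin 3) ℂ) :
    pderiv 0 (ofNull p) = ofNull (pderiv 0 p + pderiv 1 p) := by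
  rw [ofNull, pderiv_aeval, Fin.sum_univ_three]
  simp [pderiv_X]

theorem pderiv_one_ofNull (p : MvPolynomial (Fin 3) ℂ) :
    pderiv 1 (ofNull p) = C I * ofNull (pderiv 0 p - pderiv 1 p) := by
  rw [ofNull, pderiv_aeval, Fin.sum_univ_three]
  simp [pderiv_X, mul_add, mul_comm, sub_eq_add_neg]

theorem pderiv_two_ofNull (p : MvPolynomial (Fin 3) ℂ) :
    pderiv 2 (ofNull p) = ofNull (pderiv 2 p) := by
  rw [ofNull, pderiv_aeval, Fin.sum_univ_three]
  simp [pderiv_X]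

theorem laplacian_ofNull (p : MvPolynomial (Fin 3) ℂ) :
    ∑ i, pderiv i (pderiv i (ofNull p)) = ofNull (nullLaplacian p) := by
  have hI : (C I * C I : MvPolynomial (Fin 3) ℂ) = -1 := by
    rw [← C_mul, Complex.I_mul_I, C_neg, C_1]
  simp only [Fin.sum_univ_three, pderiv_zero_ofNull, pderiv_one_ofNull, pderiv_two_ofNull,
    pderiv_C_mul, map_add, map_sub, nullLaplacian, pderiv_pderiv_comm (1 : Fin 3) 0]
  simp only [map_mul, map_ofNat]
  linear_combination (ofNull (pderiv 0 (pderiv 0 p)) - 2 * ofNull (pderiv 0 (pderiv 1 p))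
    + ofNull (pderiv 1 (pderiv 1 p))) * hI

def expVec (a b c : ℕ) : Fin 3 →₀ ℕ :=
  Finsupp.single 0 a + Finsupp.single 1 b + Finsupp.single 2 c

@[simp] theorem expVec_apply_zero (a b c : ℕ) : expVec a b c 0 = a := by simp [expVec]
@[simp] theorem expVec_apply_one (a b c : ℕ) : expVec a b c 1 = b := by simp [expVec]
@[simp] theorem expVec_apply_two (a b c : ℕ) : expVec a b c 2 = c := by simp [expVec]

theorem expVec_eta (d : Fin 3 →₀ ℕ) : expVec (d 0) (d 1) (d 2) = d := by
  ext i; fin_cases i <;> simp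

def squareExp (d : Fin 3 →₀ ℕ) : Fin 2 →₀ ℕ :=
  Finsupp.single 0 (2 * d 0 + d 2) + Finsupp.single 1 (2 * d 1 + d 2)

@[simp] theorem squareExp_apply_zero (d : Fin 3 →₀ ℕ) : squareExp d 0 = 2 * d 0 + d 2 := by
  simp [squareExp]
@[simp] theorem squareExp_apply_one (d : Fin 3 →₀ ℕ) : squareExp d 1 = 2 * d 1 + d 2 := by
  simp [squareExp]

theorem squareExp_eq_iff {d : Fin 3 →₀ ℕ} {e : Fin 2 →₀ ℕ} :
    squareExp d = e ↔ 2 * d 0 + d 2 = e 0 ∧ 2 * d 1 + d 2 = e 1 := by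
  simp [Finsupp.ext_iff, Fin.forall_fin_two, eq_comm]

theorem nullCartanPullback_monomial (d : Fin 3 →₀ ℕ) (r : ℂ) :
    nullCartanPullback (monomial d r) = monomial (squareExp d) (I ^ d 2 * r) := by
  rw [nullCartanPullback, aeval_monomial, monomial_eq, Finsupp.prod_fintype _ _ (by simp),
    Finsupp.prod_fintype _ _ (by simp), Fin.prod_univ_three, Fin.prod_univ_two]
  simp only [algebraMap_eq, Matrix.cons_val_zero, Matrix.cons_val_one, Matrix.cons_val, mul_pow,
    ← pow_mul, pow_add, C_mul, C_pow, squareExp_apply_zero, squareExp_apply_one]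
  ring

theorem isHomogeneous_nullCartanPullback {p : MvPolynomial (Fin 3) ℂ} {n : ℕ}
    (hp : p.IsHomogeneous n) : (nullCartanPullback p).IsHomogeneous (2 * n) :=
  hp.aeval _ fun i => by
    fin_cases i
    · exact isHomogeneous_X_pow _ _
    · exact isHomogeneous_X_pow _ _
    · exact ((isHomogeneous_X _ _).mul (isHomogeneous_X _ _)).C_mul _

def fiber (e : Fin 2 →₀ ℕ) : Finset (Fin 3 →₀ ℕ) :=
  {d ∈ Iic (expVec (e 0) (e 1) (e 0)) | squareExp d = e}

theorem mem_fiber {d : Fin 3 →₀ ℕ} {e : Fin 2 →₀ ℕ} : d ∈ fiber e ↔ squareExp d = e := by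
  refine ⟨fun h => (mem_filter.1 h).2, fun h => mem_filter.2 ⟨?_, h⟩⟩
  rw [squareExp_eq_iff] at h
  rw [mem_Iic, Finsupp.le_def]
  intro i
  fin_cases i <;> simp <;> omega

theorem coeff_nullCartanPullback (p : MvPolynomial (Fin 3) ℂ) (e : Fin 2 →₀ ℕ) :
    coeff e (nullCartanPullback p) = ∑ d ∈ fiber e, I ^ d 2 * coeff d p := by
  classical
  induction p using MvPolynomial.induction_on' with
  | monomial d r =>
    simp only [nullCartanPullback_monomial, coeff_monomial, mul_ite, mul_zero, sum_ite_eq,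
      mem_fiber]
  | add p q hp hq => simp only [map_add, coeff_add, hp, hq, mul_add, sum_add_distrib]

theorem coeff_nullLaplacian (p : MvPolynomial (Fin 3) ℂ) (a b c : ℕ) :
    coeff (expVec a b c) (nullLaplacian p) =
      4 * (a + 1) * (b + 1) * coeff (expVec (a + 1) (b + 1) c) p
        + (c + 1) * (c + 2) * coeff (expVec a b (c + 2)) p := by
  have h01 :
      expVec a b c + Finsupp.single 0 1 + Finsupp.single 1 1 = expVec (a + 1) (b + 1) c := by
    ext i; fin_cases i <;> simp
  have h22 : expVec a b c + Finsupp.single 2 1 + Finsupp.single 2 1 = expVec a b (c + 2) := by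
    ext i; fin_cases i <;> simp
  simp only [nullLaplacian, coeff_add, coeff_C_mul, coeff_pderiv, h01, h22, Finsupp.coe_add,
    Pi.add_apply, Finsupp.single_apply, expVec_apply_zero, expVec_apply_one, expVec_apply_two]
  push_cast
  ring

def factorialWeight (d : Fin 3 →₀ ℕ) : ℕ :=
  4 ^ d 0 * (d 0).factorial * (d 1).factorial * (d 2).factorial

theorem factorialWeight_pos (d : Fin 3 →₀ ℕ) : 0 < factorialWeight d := by
  unfold factorialWeight
  positivity

def normCoeff (p : MvPolynomial (Fin 3) ℂ) (d : Fin 3 →₀ ℕ) : ℂ :=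
  I ^ d 2 * factorialWeight d * coeff d p

theorem normCoeff_sub_normCoeff (p : MvPolynomial (Fin 3) ℂ) (a b c : ℕ) :
    normCoeff p (expVec (a + 1) (b + 1) c) - normCoeff p (expVec a b (c + 2)) =
      I ^ c * factorialWeight (expVec a b c) * coeff (expVec a b c) (nullLaplacian p) := by
  have hI : I ^ (c + 2) = -I ^ c := by rw [pow_add, Complex.I_sq, mul_neg_one]
  simp only [coeff_nullLaplacian, normCoeff, factorialWeight, expVec_apply_zero,
    expVec_apply_one, expVec_apply_two, hI, Nat.factorial_succ]
  push_cast
  ring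

theorem nullLaplacian_eq_zero_iff (p : MvPolynomial (Fin 3) ℂ) :
    nullLaplacian p = 0 ↔
      ∀ a b c, normCoeff p (expVec (a + 1) (b + 1) c) = normCoeff p (expVec a b (c + 2)) := by
  simp_rw [← sub_eq_zero (a := normCoeff p _), normCoeff_sub_normCoeff]
  refine ⟨fun h a b c => by simp [h], fun h => ?_⟩
  ext d
  simpa [expVec_eta, (factorialWeight_pos _).ne'] using h (d 0) (d 1) (d 2)

theorem normCoeff_expVec_add_two_mul {p : MvPolynomial (Fin 3) ℂ} (hp : nullLaplacian p = 0)
    (a b c k : ℕ) :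
    normCoeff p (expVec a b (c + 2 * k)) = normCoeff p (expVec (a + k) (b + k) c) := by
  induction k generalizing a b with
  | zero => rfl
  | succ k ih =>
    rw [show c + 2 * (k + 1) = c + 2 * k + 2 by ring, ← (nullLaplacian_eq_zero_iff p).1 hp, ih]
    congr 2 <;> omega

/-- The exponent of least `z`-degree in `fiber e`. -/
def baseExp (e : Fin 2 →₀ ℕ) : Fin 3 →₀ ℕ := expVec (e 0 / 2) (e 1 / 2) (e 0 % 2)

theorem normCoeff_eq_normCoeff_baseExp {p : MvPolynomial (Fin 3) ℂ} (hp : nullLaplacian p = 0)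
    (d : Fin 3 →₀ ℕ) :
    normCoeff p d = normCoeff p (baseExp (squareExp d)) := by
  have hd := normCoeff_expVec_add_two_mul hp (d 0) (d 1) (d 2 % 2) (d 2 / 2)
  rw [Nat.mod_add_div, expVec_eta] at hd
  rw [hd, baseExp]
  congr 2 <;> simp <;> omega

theorem baseExp_mem_fiber {e : Fin 2 →₀ ℕ} (he : e 0 % 2 = e 1 % 2) : baseExp e ∈ fiber e := by
  rw [mem_fiber, squareExp_eq_iff, baseExp]
  simp only [expVec_apply_zero, expVec_apply_one, expVec_apply_two]
  omega

def fiberWeight (e : Fin 2 →₀ ℕ) : ℂ := ∑ d ∈ fiber e, ((factorialWeight d : ℂ))⁻¹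

theorem fiberWeight_ne_zero {e : Fin 2 →₀ ℕ} (he : (fiber e).Nonempty) : fiberWeight e ≠ 0 := by
  have hpos : (0 : ℚ) < ∑ d ∈ fiber e, ((factorialWeight d : ℚ))⁻¹ :=
    sum_pos (fun d _ => by simpa using factorialWeight_pos d) he
  simpa [fiberWeight] using (Rat.cast_ne_zero (α := ℂ)).2 hpos.ne'

theorem coeff_nullCartanPullback_eq_mul_fiberWeight {p : MvPolynomial (Fin 3) ℂ}
    (g : (Fin 2 →₀ ℕ) → ℂ) (hg : ∀ d, normCoeff p d = g (squareExp d)) (e : Fin 2 →₀ ℕ) :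
    coeff e (nullCartanPullback p) = g e * fiberWeight e := by
  rw [coeff_nullCartanPullback, fiberWeight, mul_sum]
  refine sum_congr rfl fun d hd => ?_
  have hw : (factorialWeight d : ℂ) ≠ 0 := Nat.cast_ne_zero.2 (factorialWeight_pos d).ne'
  rw [← mem_fiber.1 hd, ← hg, normCoeff]
  field_simp

theorem eq_zero_of_nullLaplacian_eq_zero {p : MvPolynomial (Fin 3) ℂ} (hp : nullLaplacian p = 0)
    (hθ : nullCartanPullback p = 0) : p = 0 := by
  ext d
  have h := coeff_nullCartanPullback_eq_mul_fiberWeight (fun e => normCoeff p (baseExp e))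
    (normCoeff_eq_normCoeff_baseExp hp) (squareExp d)
  rw [hθ, coeff_zero, eq_comm, mul_eq_zero, ← normCoeff_eq_normCoeff_baseExp hp] at h
  simpa [normCoeff, fiberWeight_ne_zero ⟨d, mem_fiber.2 rfl⟩, (factorialWeight_pos d).ne'] using h

theorem exists_nullLaplacian_eq_zero_and_nullCartanPullback_eq {n : ℕ}
    {q : MvPolynomial (Fin 2) ℂ} (hq : q.IsHomogeneous (2 * n)) :
    ∃ p : MvPolynomial (Fin 3) ℂ,
      p.IsHomogeneous n ∧ nullLaplacian p = 0 ∧ nullCartanPullback p = q := by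
  set g : (Fin 2 →₀ ℕ) → ℂ := fun e => coeff e q / fiberWeight e
  have hg : ∀ d, g (squareExp d) ≠ 0 → coeff (squareExp d) q ≠ 0 :=
    fun d hd h => hd (by simp [g, h])
  obtain ⟨p, hp⟩ := exists_coeff_eq (fun d => g (squareExp d) / (I ^ d 2 * factorialWeight d))
    (q.support.biUnion fiber) fun d hd =>
      mem_biUnion.2 ⟨_, mem_support_iff.2 (hg d (left_ne_zero_of_mul hd)), mem_fiber.2 rfl⟩
  have hnorm : ∀ d, normCoeff p d = g (squareExp d) := fun d => by
    have hw : (factorialWeight d : ℂ) ≠ 0 := Nat.cast_ne_zero.2 (factorialWeight_pos d).ne'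
    rw [normCoeff, hp]
    field_simp
  refine ⟨p, fun d hd => ?_, (nullLaplacian_eq_zero_iff p).2 fun a b c => ?_, ?_⟩
  · have hsum := hq.sum_eq (hg d (left_ne_zero_of_mul (hp d ▸ hd)))
    rw [Fin.sum_univ_two, squareExp_apply_zero, squareExp_apply_one] at hsum
    rw [Finsupp.weight_one_eq_sum, Fin.sum_univ_three]
    omega
  · rw [hnorm, hnorm]
    congr 1
    simp only [squareExp_eq_iff, squareExp_apply_zero, squareExp_apply_one, expVec_apply_zero,
      expVec_apply_one, expVec_apply_two]
    omega
  · ext e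
    rw [coeff_nullCartanPullback_eq_mul_fiberWeight g hnorm]
    by_cases he : coeff e q = 0
    · simp [g, he]
    have hsum := hq.sum_eq he
    rw [Fin.sum_univ_two] at hsum
    exact div_mul_cancel₀ _ (fiberWeight_ne_zero ⟨_, baseExp_mem_fiber (e := e) (by omega)⟩)

theorem bijOn_nullCartanPullback (n : ℕ) :
    Set.BijOn nullCartanPullback {p | p.IsHomogeneous n ∧ nullLaplacian p = 0}
      {q | q.IsHomogeneous (2 * n)} := by
  refine ⟨fun p hp => isHomogeneous_nullCartanPullback hp.1, fun p hp q hq hpq => ?_,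
    fun q hq => ?_⟩
  · rw [← sub_eq_zero]
    refine eq_zero_of_nullLaplacian_eq_zero ?_ (by rw [map_sub, hpq, sub_self])
    have hsub : nullLaplacian (p - q) = nullLaplacian p - nullLaplacian q := by
      simp only [nullLaplacian, map_sub]
      ring
    rw [hsub, hp.2, hq.2, sub_zero]
  · obtain ⟨p, hp, hD, rfl⟩ := exists_nullLaplacian_eq_zero_and_nullCartanPullback_eq hq
    exact ⟨p, ⟨hp, hD⟩, rfl⟩

theorem bijOn_toNull (n : ℕ) :
    Set.BijOn toNull {p | p.IsHomogeneous n ∧ ∑ i, pderiv i (pderiv i p) = 0}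
      {p | p.IsHomogeneous n ∧ nullLaplacian p = 0} := by
  refine Set.InvOn.bijOn ⟨fun p _ => ofNull_toNull p, fun p _ => toNull_ofNull p⟩ ?_ ?_
  · rintro p ⟨hp, hΔ⟩
    rw [← ofNull_toNull p, laplacian_ofNull] at hΔ
    exact ⟨isHomogeneous_toNull hp, by simpa [toNull_ofNull] using congr_arg toNull hΔ⟩
  · rintro p ⟨hp, hD⟩
    exact ⟨isHomogeneous_ofNull hp, by rw [laplacian_ofNull, hD, map_zero]⟩

theorem cartanPullback_eq_comp_toNull : cartanPullback = nullCartanPullback ∘ toNull :=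
  funext fun p => by rw [Function.comp_apply, ← cartanPullback_ofNull, ofNull_toNull]

end

end Cartan

/-- For every `n`, the map `φ*` sends harmonic homogeneous polynomials of
degree `n` in three complex variables to binary forms of degree `2n` (well-definedness),
it is linear, and it is a bijection from the space of harmonic homogeneous degree-`n`
polynomials onto the space of binary forms of degree `2n`. -/
theorem cartanPullback_bijOn (n : ℕ) :
    (∀ p : MvPolynomial (Fin 3) ℂ, p.IsHomogeneous n →
        (∑ i, pderiv i (pderiv i p)) = 0 → (cartanPullback p).IsHomogeneous (2 * n)) ∧
    (∀ (c : ℂ) (p q : MvPolynomial (Fin 3) ℂ),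
        cartanPullback (c • p + q) = c • cartanPullback p + cartanPullback q) ∧
    Set.BijOn cartanPullback
      {p : MvPolynomial (Fin 3) ℂ |
        p.IsHomogeneous n ∧ (∑ i, pderiv i (pderiv i p)) = 0}
      {q : MvPolynomial (Fin 2) ℂ | q.IsHomogeneous (2 * n)} := by
  rw [Cartan.cartanPullback_eq_comp_toNull]
  exact ⟨fun p hp _ => Cartan.isHomogeneous_nullCartanPullback (Cartan.isHomogeneous_toNull hp),
    fun c p q => by simp, (Cartan.bijOn_nullCartanPullback n).comp (Cartan.bijOn_toNull n)⟩
end
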